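/- arXiv:math/0008135 — 9 statements merged into one kernel-verified Lean document; each statement's English description precedes it below -/
import Mathlib

section
/- In a two-dimensional strictly convex real normed space Y, there do not exist four points a₁, a₂, a₃, a₄ that are pairwise at distance d > 0 from each other. -/
section aux
variable {Y : Type*} [NormedAddCommGroup Y] [NormedSpace ℝ Y]

/-- No point of an equidistant quadruple lies in the convex hull of the other three. -/
lemma segA {d : ℝ} (hd : 0 < d) (x y z w : Y)
    (hxy : ‖x - y‖ = d) (hxz : ‖x - z‖ = d) (hxw : ‖x - w‖ = d)
    (hyz : ‖y - z‖ = d) (hyw : ‖y - w‖ = d) (hzw : ‖z - w‖ = d)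
    (hx : x ∈ convexHull ℝ ({y, z, w} : Set Y)) : False := by
  rw [show ({y, z, w} : Set Y) = insert y {z, w} from rfl,
    convexHull_insert (by simp : ({z, w} : Set Y).Nonempty), convexHull_pair,
    mem_convexJoin] at hx
  obtain ⟨y', hy', q, hq, hxq⟩ := hx
  rw [show y' = y from hy'] at hxq
  obtain ⟨u, v, hu, hv, huv, hpq⟩ := hq
  obtain ⟨α, β, hα, hβ, hαβ, hx'⟩ := hxq
  obtain rfl : u = 1 - v := by linarith
  obtain rfl : α = 1 - β := by linarith
  -- ‖y - q‖ ≤ d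
  have hyq : y - q = (1 - v) • (y - z) + v • (y - w) := by rw [← hpq]; module
  have hyqle : ‖y - q‖ ≤ d := by
    rw [hyq]
    calc ‖(1 - v) • (y - z) + v • (y - w)‖ ≤ ‖(1-v) • (y - z)‖ + ‖v • (y - w)‖ :=
          norm_add_le _ _
      _ = (1 - v) * ‖y - z‖ + v * ‖y - w‖ := by
          rw [norm_smul, norm_smul, Real.norm_eq_abs, Real.norm_eq_abs,
            abs_of_nonneg (by linarith), abs_of_nonneg hv]
      _ = d := by rw [hyz, hyw]; ring
  -- ‖x - y‖ = β ‖y - q‖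
  have hxy' : x - y = β • (q - y) := by rw [← hx']; module
  have hβd : β * ‖y - q‖ = d := by
    have : ‖x - y‖ = β * ‖q - y‖ := by
      rw [hxy', norm_smul, Real.norm_eq_abs, abs_of_nonneg hβ]
    rw [norm_sub_rev q y] at this
    rw [← this, hxy]
  have hβ1 : β = 1 := by nlinarith
  have hxq2 : x = q := by
    have : x - q = (1 - β) • (y - q) := by rw [← hx']; module
    rw [hβ1] at this; simpa [sub_eq_zero] using this
  subst hxq2
  -- now x ∈ segment z w : z - x = v • (z - w), x - w = (1-v) • (z - w)
  have h1 : z - x = v • (z - w) := by rw [← hpq]; module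
  have h2 : x - w = (1 - v) • (z - w) := by rw [← hpq]; module
  have e1 : ‖z - x‖ = v * ‖z - w‖ := by
    rw [h1, norm_smul, Real.norm_eq_abs, abs_of_nonneg hv]
  rw [norm_sub_rev, hxz, hzw] at e1
  have e2 : ‖x - w‖ = (1 - v) * ‖z - w‖ := by
    rw [h2, norm_smul, Real.norm_eq_abs, abs_of_nonneg (by linarith)]
  rw [hxw, hzw] at e2
  nlinarith

/-- Segments between the two pairs of an equidistant quadruple cannot meet. -/
lemma segB {d : ℝ} (hd : 0 < d)
    (hsc : ∀ a b : Y, a ≠ 0 → b ≠ 0 → ‖a + b‖ = ‖a‖ + ‖b‖ → ∃ γ : ℝ, 0 < γ ∧ a = γ • b)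
    (x y z w : Y)
    (hxy : ‖x - y‖ = d) (hxz : ‖x - z‖ = d) (hxw : ‖x - w‖ = d)
    (hyz : ‖y - z‖ = d) (hyw : ‖y - w‖ = d) (hzw : ‖z - w‖ = d)
    (p : Y) (hp1 : p ∈ segment ℝ x y) (hp2 : p ∈ segment ℝ z w) : False := by
  obtain ⟨u, v, hu, hv, huv, hpxy⟩ := hp1
  obtain ⟨s, r, hs, hr, hsr, hpzw⟩ := hp2
  obtain rfl : u = 1 - v := by linarith
  obtain rfl : s = 1 - r := by linarith
  have hxy0 : x - y ≠ 0 := by intro h; rw [h, norm_zero] at hxy; linarith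
  have hzw0 : z - w ≠ 0 := by intro h; rw [h, norm_zero] at hzw; linarith
  have e1 : x - p = v • (x - y) := by rw [← hpxy]; module
  have e2 : p - y = (1 - v) • (x - y) := by rw [← hpxy]; module
  have e3 : z - p = r • (z - w) := by rw [← hpzw]; module
  have e4 : p - w = (1 - r) • (z - w) := by rw [← hpzw]; module
  have n1 : ‖x - p‖ = v * d := by
    rw [e1, norm_smul, Real.norm_eq_abs, abs_of_nonneg hv, hxy]
  have n2 : ‖p - y‖ = (1 - v) * d := by
    rw [e2, norm_smul, Real.norm_eq_abs, abs_of_nonneg (by linarith), hxy]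
  have n3 : ‖p - z‖ = r * d := by
    rw [norm_sub_rev, e3, norm_smul, Real.norm_eq_abs, abs_of_nonneg hr, hzw]
  have n4 : ‖p - w‖ = (1 - r) * d := by
    rw [e4, norm_smul, Real.norm_eq_abs, abs_of_nonneg (by linarith), hzw]
  have tineq1 : d ≤ v * d + r * d := by
    calc d = ‖x - z‖ := hxz.symm
      _ ≤ ‖x - p‖ + ‖p - z‖ := by
          have := norm_add_le (x - p) (p - z); simpa using this
      _ = v * d + r * d := by rw [n1, n3]
  have tineq2 : d ≤ (1 - v) * d + (1 - r) * d := by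
    calc d = ‖y - w‖ := hyw.symm
      _ ≤ ‖y - p‖ + ‖p - w‖ := by
          have := norm_add_le (y - p) (p - w); simpa using this
      _ = (1 - v) * d + (1 - r) * d := by rw [norm_sub_rev, n2, n4]
  have heq1 : v * d + r * d = d := by nlinarith
  -- v ≠ 0 and r ≠ 0
  have hv0 : v ≠ 0 := by
    rintro rfl
    have hpx : p = x := by
      have := e1; simp only [zero_smul] at this
      rw [sub_eq_zero] at this; exact this.symm
    rw [hpx, hxz] at n3
    rw [hpx, hxw] at n4
    nlinarith
  have hr0 : r ≠ 0 := by
    rintro rfl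
    have hpz : p = z := by
      have := e3; simp only [zero_smul] at this
      rw [sub_eq_zero] at this; exact this.symm
    rw [hpz, hxz] at n1
    rw [hpz, norm_sub_rev z y, hyz] at n2
    nlinarith
  -- strict convexity
  have ha : x - p ≠ 0 := by rw [e1]; exact smul_ne_zero hv0 hxy0
  have hb : p - z ≠ 0 := by
    intro h
    have : z - p = 0 := by rw [← neg_sub p z, h, neg_zero]
    rw [e3] at this
    exact hzw0 (by simpa [hr0] using smul_eq_zero.mp this)
  have hnorm : ‖(x - p) + (p - z)‖ = ‖x - p‖ + ‖p - z‖ := by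
    rw [n1, n3, show x - p + (p - z) = x - z from by abel, hxz, heq1]
  obtain ⟨γ, hγ, hab⟩ := hsc (x - p) (p - z) ha hb hnorm
  -- p - z = (v/γ) • (x - y)
  have hpz : p - z = (v / γ) • (x - y) := by
    have h5 : γ • (p - z) = v • (x - y) := by rw [← hab, e1]
    have h6 : p - z = (γ⁻¹ * v) • (x - y) := by
      rw [mul_smul, ← h5, smul_smul, inv_mul_cancel₀ (ne_of_gt hγ), one_smul]
    rw [show v / γ = γ⁻¹ * v by ring]
    exact h6
  have hc : 0 < v / γ := div_pos (lt_of_le_of_ne hv (Ne.symm hv0)) hγ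
  have hxz2 : x - z = (v + v / γ) • (x - y) := by
    rw [show x - z = (x - p) + (p - z) from by abel, e1, hpz, ← add_smul]
  have hsum : ‖x - z‖ = (v + v / γ) * d := by
    rw [hxz2, norm_smul, Real.norm_eq_abs, abs_of_pos (by linarith), hxy]
  rw [hxz] at hsum
  have hcv : v / γ = 1 - v := by
    have h7 : 1 * d = (v + v / γ) * d := by rw [one_mul]; exact hsum
    have := mul_right_cancel₀ (ne_of_gt hd) h7
    linarith
  have hyzeq : y = z := by
    have : p - z = p - y := by rw [hpz, hcv, ← e2]
    exact (sub_right_injective this).symm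
  rw [hyzeq] at hyz
  simp at hyz; linarith

end aux

/-- In a two-dimensional strictly convex real normed space `Y`, there do not exist four
points pairwise at distance `d > 0` from each other. -/
theorem no_four_equidistant_points {Y : Type*} [NormedAddCommGroup Y] [NormedSpace ℝ Y]
    (hdim : Module.finrank ℝ Y = 2)
    (hsc : ∀ a b : Y, a ≠ 0 → b ≠ 0 → ‖a + b‖ = ‖a‖ + ‖b‖ → ∃ γ : ℝ, 0 < γ ∧ a = γ • b)
    (d : ℝ) (hd : 0 < d) :
    ¬ ∃ a₁ a₂ a₃ a₄ : Y,
      ‖a₁ - a₂‖ = d ∧ ‖a₁ - a₃‖ = d ∧ ‖a₁ - a₄‖ = d ∧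
      ‖a₂ - a₃‖ = d ∧ ‖a₂ - a₄‖ = d ∧ ‖a₃ - a₄‖ = d := by
  rintro ⟨a₁, a₂, a₃, a₄, h12, h13, h14, h23, h24, h34⟩
  classical
  have : FiniteDimensional ℝ Y := FiniteDimensional.of_finrank_eq_succ hdim
  set f : Fin 4 → Y := ![a₁, a₂, a₃, a₄] with hf
  have hdep : ¬ AffineIndependent ℝ f := by
    intro h
    have := h.finrank_vectorSpan (by simp : Fintype.card (Fin 4) = 3 + 1)
    have hle : Module.finrank ℝ (vectorSpan ℝ (Set.range f)) ≤ 2 := by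
      rw [← hdim]; exact Submodule.finrank_le _
    omega
  obtain ⟨I, p, hpI, hpIc⟩ := Convex.radon_partition hdep
  have hD : ∀ i j : Fin 4, i ≠ j → ‖f i - f j‖ = d := by
    intro i j hij
    fin_cases i <;> fin_cases j <;>
      simp only [hf, Matrix.cons_val_zero, Matrix.cons_val_one, Matrix.head_cons,
        Matrix.cons_val_two, Matrix.tail_cons, Matrix.cons_val_three] <;>
      first
        | exact absurd rfl hij
        | assumption
        | (rw [norm_sub_rev]; assumption)
  by_cases h0 : (0 : Fin 4) ∈ I <;> by_cases h1 : (1 : Fin 4) ∈ I <;>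
    by_cases h2 : (2 : Fin 4) ∈ I <;> by_cases h3 : (3 : Fin 4) ∈ I
  · have hIe : I = ({0, 1, 2, 3} : Set (Fin 4)) := by ext i; fin_cases i <;> simp [h0, h1, h2, h3]
    have hIce : Iᶜ = (∅ : Set (Fin 4)) := by ext i; fin_cases i <;> simp [h0, h1, h2, h3]
    rw [hIe] at hpI
    rw [hIce] at hpIc
    simp only [Set.image_empty, convexHull_empty, Set.mem_empty_iff_false] at hpIc
  · have hIe : I = ({0, 1, 2} : Set (Fin 4)) := by ext i; fin_cases i <;> simp [h0, h1, h2, h3]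
    have hIce : Iᶜ = ({3} : Set (Fin 4)) := by ext i; fin_cases i <;> simp [h0, h1, h2, h3]
    rw [hIe] at hpI
    rw [hIce] at hpIc
    simp only [Set.image_singleton, convexHull_singleton, Set.mem_singleton_iff] at hpIc
    subst hpIc
    simp only [Set.image_insert_eq, Set.image_singleton] at hpI
    exact segA hd (f 3) (f 0) (f 1) (f 2) (hD 3 0 (by decide)) (hD 3 1 (by decide)) (hD 3 2 (by decide)) (hD 0 1 (by decide)) (hD 0 2 (by decide)) (hD 1 2 (by decide)) hpI
  · have hIe : I = ({0, 1, 3} : Set (Fin 4)) := by ext i; fin_cases i <;> simp [h0, h1, h2, h3]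
    have hIce : Iᶜ = ({2} : Set (Fin 4)) := by ext i; fin_cases i <;> simp [h0, h1, h2, h3]
    rw [hIe] at hpI
    rw [hIce] at hpIc
    simp only [Set.image_singleton, convexHull_singleton, Set.mem_singleton_iff] at hpIc
    subst hpIc
    simp only [Set.image_insert_eq, Set.image_singleton] at hpI
    exact segA hd (f 2) (f 0) (f 1) (f 3) (hD 2 0 (by decide)) (hD 2 1 (by decide)) (hD 2 3 (by decide)) (hD 0 1 (by decide)) (hD 0 3 (by decide)) (hD 1 3 (by decide)) hpI
  · have hIe : I = ({0, 1} : Set (Fin 4)) := by ext i; fin_cases i <;> simp [h0, h1, h2, h3]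
    have hIce : Iᶜ = ({2, 3} : Set (Fin 4)) := by ext i; fin_cases i <;> simp [h0, h1, h2, h3]
    rw [hIe] at hpI
    rw [hIce] at hpIc
    simp only [Set.image_insert_eq, Set.image_singleton, convexHull_pair] at hpI hpIc
    exact segB hd hsc (f 0) (f 1) (f 2) (f 3) (hD 0 1 (by decide)) (hD 0 2 (by decide)) (hD 0 3 (by decide)) (hD 1 2 (by decide)) (hD 1 3 (by decide)) (hD 2 3 (by decide)) p hpI hpIc
  · have hIe : I = ({0, 2, 3} : Set (Fin 4)) := by ext i; fin_cases i <;> simp [h0, h1, h2, h3]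
    have hIce : Iᶜ = ({1} : Set (Fin 4)) := by ext i; fin_cases i <;> simp [h0, h1, h2, h3]
    rw [hIe] at hpI
    rw [hIce] at hpIc
    simp only [Set.image_singleton, convexHull_singleton, Set.mem_singleton_iff] at hpIc
    subst hpIc
    simp only [Set.image_insert_eq, Set.image_singleton] at hpI
    exact segA hd (f 1) (f 0) (f 2) (f 3) (hD 1 0 (by decide)) (hD 1 2 (by decide)) (hD 1 3 (by decide)) (hD 0 2 (by decide)) (hD 0 3 (by decide)) (hD 2 3 (by decide)) hpI
  · have hIe : I = ({0, 2} : Set (Fin 4)) := by ext i; fin_cases i <;> simp [h0, h1, h2, h3]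
    have hIce : Iᶜ = ({1, 3} : Set (Fin 4)) := by ext i; fin_cases i <;> simp [h0, h1, h2, h3]
    rw [hIe] at hpI
    rw [hIce] at hpIc
    simp only [Set.image_insert_eq, Set.image_singleton, convexHull_pair] at hpI hpIc
    exact segB hd hsc (f 0) (f 2) (f 1) (f 3) (hD 0 2 (by decide)) (hD 0 1 (by decide)) (hD 0 3 (by decide)) (hD 2 1 (by decide)) (hD 2 3 (by decide)) (hD 1 3 (by decide)) p hpI hpIc
  · have hIe : I = ({0, 3} : Set (Fin 4)) := by ext i; fin_cases i <;> simp [h0, h1, h2, h3]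
    have hIce : Iᶜ = ({1, 2} : Set (Fin 4)) := by ext i; fin_cases i <;> simp [h0, h1, h2, h3]
    rw [hIe] at hpI
    rw [hIce] at hpIc
    simp only [Set.image_insert_eq, Set.image_singleton, convexHull_pair] at hpI hpIc
    exact segB hd hsc (f 0) (f 3) (f 1) (f 2) (hD 0 3 (by decide)) (hD 0 1 (by decide)) (hD 0 2 (by decide)) (hD 3 1 (by decide)) (hD 3 2 (by decide)) (hD 1 2 (by decide)) p hpI hpIc
  · have hIe : I = ({0} : Set (Fin 4)) := by ext i; fin_cases i <;> simp [h0, h1, h2, h3]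
    have hIce : Iᶜ = ({1, 2, 3} : Set (Fin 4)) := by ext i; fin_cases i <;> simp [h0, h1, h2, h3]
    rw [hIe] at hpI
    rw [hIce] at hpIc
    simp only [Set.image_singleton, convexHull_singleton, Set.mem_singleton_iff] at hpI
    subst hpI
    simp only [Set.image_insert_eq, Set.image_singleton] at hpIc
    exact segA hd (f 0) (f 1) (f 2) (f 3) (hD 0 1 (by decide)) (hD 0 2 (by decide)) (hD 0 3 (by decide)) (hD 1 2 (by decide)) (hD 1 3 (by decide)) (hD 2 3 (by decide)) hpIc
  · have hIe : I = ({1, 2, 3} : Set (Fin 4)) := by ext i; fin_cases i <;> simp [h0, h1, h2, h3]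
    have hIce : Iᶜ = ({0} : Set (Fin 4)) := by ext i; fin_cases i <;> simp [h0, h1, h2, h3]
    rw [hIe] at hpI
    rw [hIce] at hpIc
    simp only [Set.image_singleton, convexHull_singleton, Set.mem_singleton_iff] at hpIc
    subst hpIc
    simp only [Set.image_insert_eq, Set.image_singleton] at hpI
    exact segA hd (f 0) (f 1) (f 2) (f 3) (hD 0 1 (by decide)) (hD 0 2 (by decide)) (hD 0 3 (by decide)) (hD 1 2 (by decide)) (hD 1 3 (by decide)) (hD 2 3 (by decide)) hpI
  · have hIe : I = ({1, 2} : Set (Fin 4)) := by ext i; fin_cases i <;> simp [h0, h1, h2, h3]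
    have hIce : Iᶜ = ({0, 3} : Set (Fin 4)) := by ext i; fin_cases i <;> simp [h0, h1, h2, h3]
    rw [hIe] at hpI
    rw [hIce] at hpIc
    simp only [Set.image_insert_eq, Set.image_singleton, convexHull_pair] at hpI hpIc
    exact segB hd hsc (f 1) (f 2) (f 0) (f 3) (hD 1 2 (by decide)) (hD 1 0 (by decide)) (hD 1 3 (by decide)) (hD 2 0 (by decide)) (hD 2 3 (by decide)) (hD 0 3 (by decide)) p hpI hpIc
  · have hIe : I = ({1, 3} : Set (Fin 4)) := by ext i; fin_cases i <;> simp [h0, h1, h2, h3]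
    have hIce : Iᶜ = ({0, 2} : Set (Fin 4)) := by ext i; fin_cases i <;> simp [h0, h1, h2, h3]
    rw [hIe] at hpI
    rw [hIce] at hpIc
    simp only [Set.image_insert_eq, Set.image_singleton, convexHull_pair] at hpI hpIc
    exact segB hd hsc (f 1) (f 3) (f 0) (f 2) (hD 1 3 (by decide)) (hD 1 0 (by decide)) (hD 1 2 (by decide)) (hD 3 0 (by decide)) (hD 3 2 (by decide)) (hD 0 2 (by decide)) p hpI hpIc
  · have hIe : I = ({1} : Set (Fin 4)) := by ext i; fin_cases i <;> simp [h0, h1, h2, h3]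
    have hIce : Iᶜ = ({0, 2, 3} : Set (Fin 4)) := by ext i; fin_cases i <;> simp [h0, h1, h2, h3]
    rw [hIe] at hpI
    rw [hIce] at hpIc
    simp only [Set.image_singleton, convexHull_singleton, Set.mem_singleton_iff] at hpI
    subst hpI
    simp only [Set.image_insert_eq, Set.image_singleton] at hpIc
    exact segA hd (f 1) (f 0) (f 2) (f 3) (hD 1 0 (by decide)) (hD 1 2 (by decide)) (hD 1 3 (by decide)) (hD 0 2 (by decide)) (hD 0 3 (by decide)) (hD 2 3 (by decide)) hpIc
  · have hIe : I = ({2, 3} : Set (Fin 4)) := by ext i; fin_cases i <;> simp [h0, h1, h2, h3]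
    have hIce : Iᶜ = ({0, 1} : Set (Fin 4)) := by ext i; fin_cases i <;> simp [h0, h1, h2, h3]
    rw [hIe] at hpI
    rw [hIce] at hpIc
    simp only [Set.image_insert_eq, Set.image_singleton, convexHull_pair] at hpI hpIc
    exact segB hd hsc (f 2) (f 3) (f 0) (f 1) (hD 2 3 (by decide)) (hD 2 0 (by decide)) (hD 2 1 (by decide)) (hD 3 0 (by decide)) (hD 3 1 (by decide)) (hD 0 1 (by decide)) p hpI hpIc
  · have hIe : I = ({2} : Set (Fin 4)) := by ext i; fin_cases i <;> simp [h0, h1, h2, h3]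
    have hIce : Iᶜ = ({0, 1, 3} : Set (Fin 4)) := by ext i; fin_cases i <;> simp [h0, h1, h2, h3]
    rw [hIe] at hpI
    rw [hIce] at hpIc
    simp only [Set.image_singleton, convexHull_singleton, Set.mem_singleton_iff] at hpI
    subst hpI
    simp only [Set.image_insert_eq, Set.image_singleton] at hpIc
    exact segA hd (f 2) (f 0) (f 1) (f 3) (hD 2 0 (by decide)) (hD 2 1 (by decide)) (hD 2 3 (by decide)) (hD 0 1 (by decide)) (hD 0 3 (by decide)) (hD 1 3 (by decide)) hpIc
  · have hIe : I = ({3} : Set (Fin 4)) := by ext i; fin_cases i <;> simp [h0, h1, h2, h3]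
    have hIce : Iᶜ = ({0, 1, 2} : Set (Fin 4)) := by ext i; fin_cases i <;> simp [h0, h1, h2, h3]
    rw [hIe] at hpI
    rw [hIce] at hpIc
    simp only [Set.image_singleton, convexHull_singleton, Set.mem_singleton_iff] at hpI
    subst hpI
    simp only [Set.image_insert_eq, Set.image_singleton] at hpIc
    exact segA hd (f 3) (f 0) (f 1) (f 2) (hD 3 0 (by decide)) (hD 3 1 (by decide)) (hD 3 2 (by decide)) (hD 0 1 (by decide)) (hD 0 2 (by decide)) (hD 1 2 (by decide)) hpIc
  · have hIe : I = (∅ : Set (Fin 4)) := by ext i; fin_cases i <;> simp [h0, h1, h2, h3]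
    have hIce : Iᶜ = ({0, 1, 2, 3} : Set (Fin 4)) := by ext i; fin_cases i <;> simp [h0, h1, h2, h3]
    rw [hIe] at hpI
    rw [hIce] at hpIc
    simp only [Set.image_empty, convexHull_empty, Set.mem_empty_iff_false] at hpI
end

section
/- In a two-dimensional strictly convex real normed space, for any a ≠ b on a line L and points c, d on the same side of L, if ||a−c|| = ||a−d|| and ||b−c|| = ||b−d||, then c = d. -/
/-!
Suppose `c ≠ d`. If both lie on `L`, a point of a line is determined by its distances to two
distinct points of it. Otherwise we may assume `c` is not farther from `L` than `d`.

If `cd` is parallel to `L`, or if the line `dc` meets `L` at a point `p` outside the segment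
`[a, b]`, then `a, b, c, d` form a convex quadrilateral. Its diagonals are longer, in total, than
a pair of opposite sides, strictly so by strict convexity. But the hypotheses give
`‖a - c‖ + ‖b - d‖ = ‖a - d‖ + ‖b - c‖`, and one side of this equation is the sum of the
diagonals, the other that of two opposite sides.

If `p` lies on `[a, b]`, then `c` lies strictly between `p` and `d`. Strict convexity makes `c`
strictly closer than `p` to `a` and to `b`, and then
`‖a - b‖ ≤ ‖a - c‖ + ‖c - b‖ < ‖a - p‖ + ‖p - b‖ = ‖a - b‖`.
-/

open AffineMap

section LinearAlgebra

variable {K V : Type*} [Field K] [AddCommGroup V] [Module K V]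

theorem LinearMap.ker_eq_span_singleton_of_finrank_eq_two (hdim : Module.finrank K V = 2)
    {f : V →ₗ[K] K} (hf : f ≠ 0) {u : V} (hu : u ≠ 0) (hfu : f u = 0) :
    LinearMap.ker f = K ∙ u := by
  have : FiniteDimensional K V := .of_finrank_eq_succ hdim
  refine eq_span_singleton_of_mem_of_finrank_eq_one ?_ hfu hu
  have := Module.Dual.finrank_ker_add_one_of_ne_zero hf
  omega

theorem mem_affineSpan_pair_iff_apply_sub_eq_zero {f : V →ₗ[K] K} {a b x : V}
    (hf : LinearMap.ker f = K ∙ (b - a)) : x ∈ line[K, a, b] ↔ f (x - a) = 0 := by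
  rw [← LinearMap.mem_ker, hf, Submodule.mem_span_singleton]
  conv_lhs => rw [← sub_add_cancel x a]
  exact vadd_left_mem_affineSpan_pair

theorem AffineSubspace.linearIndependent_sub_of_notMem {s : AffineSubspace K V} {x y z : V}
    (hx : x ∈ s) (hy : y ∈ s) (hxy : x ≠ y) (hz : z ∉ s) :
    LinearIndependent K ![x - y, z - y] := by
  refine (LinearIndependent.pair_iff' (sub_ne_zero.2 hxy)).2 fun r hr ↦ hz ?_
  have : lineMap y x r = z := by rw [lineMap_apply_module', hr, sub_add_cancel]
  exact this ▸ lineMap_mem r hy hx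

theorem LinearIndependent.pair_smul_add_smul {u v : V} (h : LinearIndependent K ![u, v])
    {a₁ b₁ a₂ b₂ : K} (hdet : a₁ * b₂ - a₂ * b₁ ≠ 0) :
    LinearIndependent K ![a₁ • u + b₁ • v, a₂ • u + b₂ • v] := by
  refine LinearIndependent.pair_iff.2 fun s t hst ↦ ?_
  obtain ⟨hu, hv⟩ := LinearIndependent.pair_iff.1 h (s * a₁ + t * a₂) (s * b₁ + t * b₂)
    (by rw [← hst]; module)
  have hs : s * (a₁ * b₂ - a₂ * b₁) = 0 := by linear_combination b₂ * hu - a₂ * hv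
  have ht : t * (a₁ * b₂ - a₂ * b₁) = 0 := by linear_combination a₁ * hv - b₁ * hu
  exact ⟨(mul_eq_zero.1 hs).resolve_right hdet, (mul_eq_zero.1 ht).resolve_right hdet⟩

end LinearAlgebra

theorem LinearMap.exists_sbtw_of_abs_lt {V : Type*} [AddCommGroup V] [Module ℝ V]
    (f : V →ₗ[ℝ] ℝ) {a c d : V} (hpos : 0 < f (c - a) * f (d - a))
    (hlt : |f (c - a)| < |f (d - a)|) : ∃ p, f (p - a) = 0 ∧ Sbtw ℝ p c d := by
  have hd : f (d - a) ≠ 0 := right_ne_zero_of_mul hpos.ne'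
  obtain ⟨k, hk⟩ : ∃ k, f (c - a) = k * f (d - a) := ⟨_, (div_mul_cancel₀ _ hd).symm⟩
  have hk₀ : 0 < k := by
    rw [hk, mul_assoc] at hpos
    exact pos_of_mul_pos_left hpos (mul_self_nonneg _)
  have hk₁ : k < 1 := by
    rw [hk, abs_mul] at hlt
    exact (le_abs_self k).trans_lt ((mul_lt_iff_lt_one_left (abs_pos.2 hd)).1 hlt)
  have hk₁' : 1 - k ≠ 0 := sub_ne_zero.2 hk₁.ne'
  have hp : f ((1 - k)⁻¹ • (c - k • d) - a) = 0 := by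
    simp only [map_sub, map_smul, smul_eq_mul] at hk ⊢
    field_simp
    linear_combination hk
  refine ⟨_, hp, sbtw_iff_mem_image_Ioo_and_ne.2 ⟨⟨k, ⟨hk₀, hk₁⟩, ?_⟩, ?_⟩⟩
  · rw [lineMap_apply_module, smul_smul, mul_inv_cancel₀ hk₁']
    module
  · intro h
    exact hd (h ▸ hp)

theorem dist_lt_or_dist_lt_of_wbtw_of_sbtw {V P : Type*} [NormedAddCommGroup V]
    [NormedSpace ℝ V] [StrictConvexSpace ℝ V] [PseudoMetricSpace P] [NormedAddTorsor V P]
    {a b p c d : P} (hp : Wbtw ℝ a p b) (hc : Sbtw ℝ p c d) :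
    dist a c < dist a d ∨ dist b c < dist b d := by
  by_contra! h
  simp only [dist_comm a, dist_comm b] at h
  have ha := (lt_max_iff.1 (hc.dist_lt_max_dist a)).resolve_right h.1.not_gt
  have hb := (lt_max_iff.1 (hc.dist_lt_max_dist b)).resolve_right h.2.not_gt
  linarith [hp.dist_add_dist, dist_triangle a c b, dist_comm a c, dist_comm a p]

theorem eq_of_mem_affineSpan_pair_of_dist_eq {V P : Type*} [NormedAddCommGroup V]
    [NormedSpace ℝ V] [MetricSpace P] [NormedAddTorsor V P] {a b c d : P} (hab : a ≠ b)
    (hc : c ∈ line[ℝ, a, b]) (hd : d ∈ line[ℝ, a, b]) (hac : dist a c = dist a d)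
    (hbc : dist b c = dist b d) : c = d := by
  obtain ⟨s, rfl⟩ := mem_affineSpan_pair_iff_exists_lineMap_eq.1 hc
  obtain ⟨t, rfl⟩ := mem_affineSpan_pair_iff_exists_lineMap_eq.1 hd
  rw [dist_left_lineMap, dist_left_lineMap] at hac
  rw [dist_right_lineMap, dist_right_lineMap] at hbc
  have h₀ := mul_right_cancel₀ (dist_ne_zero.2 hab) hac
  have h₁ := mul_right_cancel₀ (dist_ne_zero.2 hab) hbc
  simp only [Real.norm_eq_abs] at h₀ h₁
  have hs : s ^ 2 = t ^ 2 := by rw [← sq_abs s, h₀, sq_abs]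
  have hs₁ : (1 - s) ^ 2 = (1 - t) ^ 2 := by rw [← sq_abs (1 - s), h₁, sq_abs]
  rw [show s = t by nlinarith]

section StrictConvex

variable {E : Type*} [NormedAddCommGroup E] [NormedSpace ℝ E]

theorem StrictConvexSpace.of_exists_pos_smul
    (h : ∀ x y : E, x ≠ 0 → y ≠ 0 → ‖x + y‖ = ‖x‖ + ‖y‖ → ∃ γ : ℝ, 0 < γ ∧ x = γ • y) :
    StrictConvexSpace ℝ E := by
  refine .of_norm_add fun x y hx hy hxy ↦ ?_
  obtain ⟨γ, hγ, rfl⟩ := h x y (ne_zero_of_norm_ne_zero (by simp [hx]))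
    (ne_zero_of_norm_ne_zero (by simp [hy])) (by rw [hxy, hx, hy]; norm_num)
  exact SameRay.sameRay_pos_smul_left y hγ

variable [StrictConvexSpace ℝ E]

theorem norm_smul_add_smul_add_norm_lt {x y : E} (h : ¬SameRay ℝ x y) {s t : ℝ}
    (hs₀ : 0 < s) (hs₁ : s ≤ 1) (ht₀ : 0 < t) (ht₁ : t ≤ 1) :
    ‖s • x + t • y‖ + ‖(1 - s) • x + (1 - t) • y‖ < ‖x‖ + ‖y‖ := by
  have hxy : ‖s • x + t • y‖ < s * ‖x‖ + t * ‖y‖ := by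
    refine (norm_add_lt_of_not_sameRay fun hr ↦ h ?_).trans_eq ?_
    · simpa [smul_smul, hs₀.ne', ht₀.ne'] using
        (hr.pos_smul_left (inv_pos.2 hs₀)).pos_smul_right (inv_pos.2 ht₀)
    · rw [norm_smul_of_nonneg hs₀.le, norm_smul_of_nonneg ht₀.le]
  have hrest : ‖(1 - s) • x + (1 - t) • y‖ ≤ (1 - s) * ‖x‖ + (1 - t) * ‖y‖ :=
    (norm_add_le _ _).trans_eq <| by
      rw [norm_smul_of_nonneg (sub_nonneg.2 hs₁), norm_smul_of_nonneg (sub_nonneg.2 ht₁)]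
  linarith

theorem dist_add_dist_lt_of_sbtw_of_sbtw {p a b c d : E} (hb : Sbtw ℝ p b a)
    (hc : Sbtw ℝ p c d) (hind : LinearIndependent ℝ ![a - p, d - p]) :
    dist a d + dist b c < dist a c + dist b d := by
  obtain ⟨β, ⟨hβ₀, hβ₁⟩, rfl⟩ := hb.mem_image_Ioo
  obtain ⟨γ, ⟨hγ₀, hγ₁⟩, rfl⟩ := hc.mem_image_Ioo
  obtain ⟨D, hD, hD₀⟩ : ∃ D, D = 1 - β * γ ∧ 0 < D := ⟨_, rfl, by nlinarith⟩
  have hnr :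
      ¬SameRay ℝ ((1 : ℝ) • (a - p) + (-γ) • (d - p)) (β • (a - p) + (-1 : ℝ) • (d - p)) :=
    fun hr ↦ sameRay_or_sameRay_neg_iff_not_linearIndependent.1 (.inl hr)
      (hind.pair_smul_add_smul (by nlinarith))
  simp only [dist_eq_norm, lineMap_apply_module']
  -- `a - d = s • (a - c) + t • (b - d)` since the segments `[a, c]` and `[b, d]` cross
  convert norm_smul_add_smul_add_norm_lt hnr (s := (1 - β) / D) (t := (1 - γ) / D)
    (div_pos (by linarith) hD₀) ((div_le_one hD₀).2 (by nlinarith))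
    (div_pos (by linarith) hD₀) ((div_le_one hD₀).2 (by nlinarith)) using 2 <;>
  · congr 1
    match_scalars <;> field_simp <;> subst hD <;> ring

theorem dist_add_dist_lt_of_sub_eq_smul {a b c d : E}
    (hind : LinearIndependent ℝ ![b - a, c - a]) {μ : ℝ} (hμ : 0 < μ) (hcd : d - c = μ • (b - a)) :
    dist a c + dist b d < dist a d + dist b c := by
  obtain rfl := sub_eq_iff_eq_add'.1 hcd
  have hnr :
      ¬SameRay ℝ (μ • (b - a) + (1 : ℝ) • (c - a)) ((-1 : ℝ) • (b - a) + (1 : ℝ) • (c - a)) :=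
    fun hr ↦ sameRay_or_sameRay_neg_iff_not_linearIndependent.1 (.inl hr)
      (hind.pair_smul_add_smul (by linarith))
  have hμ₁ : 0 < 1 + μ := by linarith
  simp only [dist_comm a, dist_comm b, dist_eq_norm]
  convert norm_smul_add_smul_add_norm_lt hnr (s := 1 / (1 + μ)) (t := μ / (1 + μ))
    (by positivity) ((div_le_one hμ₁).2 (by linarith)) (by positivity)
    ((div_le_one hμ₁).2 (by linarith)) using 2 <;>
  · congr 1
    match_scalars <;> field_simp <;> ring

theorem dist_ne_or_dist_ne_of_sbtw {a b c d p : E} (hab : a ≠ b) (hd : d ∉ line[ℝ, a, b])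
    (hp : p ∈ line[ℝ, a, b]) (hpcd : Sbtw ℝ p c d) :
    dist a c ≠ dist a d ∨ dist b c ≠ dist b d := by
  by_contra! h
  obtain ⟨hac, hbc⟩ := h
  have hmid : ¬Wbtw ℝ a p b := fun h ↦ by
    rcases dist_lt_or_dist_lt_of_wbtw_of_sbtw h hpcd with h | h <;> linarith
  obtain ⟨hpa, hpb⟩ : p ≠ a ∧ p ≠ b := by
    constructor <;> rintro rfl
    · exact hmid (wbtw_self_left ℝ p b)
    · exact hmid (wbtw_self_right ℝ a p)
  have ha := left_mem_affineSpan_pair ℝ a b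
  have hb := right_mem_affineSpan_pair ℝ a b
  rcases (collinear_insert_of_mem_affineSpan_pair hp).wbtw_or_wbtw_or_wbtw with h | h | h
  · have := dist_add_dist_lt_of_sbtw_of_sbtw ⟨h, hpa.symm, hab⟩ hpcd
      (AffineSubspace.linearIndependent_sub_of_notMem hb hp hpb.symm hd)
    linarith
  · have := dist_add_dist_lt_of_sbtw_of_sbtw ⟨h.symm, hpb.symm, hab.symm⟩ hpcd
      (AffineSubspace.linearIndependent_sub_of_notMem ha hp hpa.symm hd)
    linarith
  · exact hmid h.symm

theorem dist_ne_or_dist_ne_of_sub_mem_span {a b c d : E} (hab : a ≠ b)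
    (hc : c ∉ line[ℝ, a, b]) (hd : d ∉ line[ℝ, a, b]) (hcd : c ≠ d)
    (hdc : d - c ∈ ℝ ∙ (b - a)) : dist a c ≠ dist a d ∨ dist b c ≠ dist b d := by
  by_contra! h
  obtain ⟨hac, hbc⟩ := h
  obtain ⟨μ, hμ⟩ := Submodule.mem_span_singleton.1 hdc
  have ha := left_mem_affineSpan_pair ℝ a b
  have hb := right_mem_affineSpan_pair ℝ a b
  rcases lt_trichotomy μ 0 with hμ₀ | rfl | hμ₀
  · have := dist_add_dist_lt_of_sub_eq_smul (c := d) (d := c)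
      (AffineSubspace.linearIndependent_sub_of_notMem hb ha hab.symm hd) (neg_pos.2 hμ₀)
      (by rw [neg_smul, hμ, neg_sub])
    linarith
  · exact hcd (sub_eq_zero.1 (by rw [← hμ, zero_smul])).symm
  · have := dist_add_dist_lt_of_sub_eq_smul
      (AffineSubspace.linearIndependent_sub_of_notMem hb ha hab.symm hc) hμ₀ hμ.symm
    linarith

theorem eq_of_dist_eq_of_abs_le {φ : E →ₗ[ℝ] ℝ} {a b c d : E} (hab : a ≠ b)
    (hφ : LinearMap.ker φ = ℝ ∙ (b - a)) (hpos : 0 < φ (c - a) * φ (d - a))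
    (hle : |φ (c - a)| ≤ |φ (d - a)|) (hac : dist a c = dist a d) (hbc : dist b c = dist b d) :
    c = d := by
  have hline (x : E) := mem_affineSpan_pair_iff_apply_sub_eq_zero (x := x) hφ
  have hc : c ∉ line[ℝ, a, b] := by rw [hline]; exact left_ne_zero_of_mul hpos.ne'
  have hd : d ∉ line[ℝ, a, b] := by rw [hline]; exact right_ne_zero_of_mul hpos.ne'
  by_contra hcd
  rcases hle.lt_or_eq with hlt | heq
  · obtain ⟨p, hp, hpcd⟩ := φ.exists_sbtw_of_abs_lt hpos hlt
    exact (dist_ne_or_dist_ne_of_sbtw hab hd ((hline p).2 hp) hpcd).elim (· hac) (· hbc)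
  · have hdc : d - c ∈ ℝ ∙ (b - a) := by
      rw [← hφ, LinearMap.mem_ker, ← sub_sub_sub_cancel_right d c a, map_sub, sub_eq_zero]
      refine ((abs_eq_abs.1 heq).resolve_right fun h ↦ ?_).symm
      rw [h, neg_mul] at hpos
      linarith [mul_self_nonneg (φ (d - a))]
    exact (dist_ne_or_dist_ne_of_sub_mem_span hab hc hd hcd hdc).elim (· hac) (· hbc)

end StrictConvex

/-- In a two-dimensional strictly convex real normed space, for any `a ≠ b` on a line `L`
and points `c, d` on the same side of `L`, if `‖a - c‖ = ‖a - d‖` and `‖b - c‖ = ‖b - d‖`,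
then `c = d`.  "Same side of `L`" means that some nonzero linear functional vanishing on
the direction of `L` takes values of the same sign (both positive times positive, i.e.
product positive) at `c - a` and `d - a`, or both points lie on `L`. -/
theorem strictConvex_same_side_unique {Y : Type*} [NormedAddCommGroup Y] [NormedSpace ℝ Y]
    (hdim : Module.finrank ℝ Y = 2)
    (hsc : ∀ a b : Y, a ≠ 0 → b ≠ 0 → ‖a + b‖ = ‖a‖ + ‖b‖ → ∃ γ : ℝ, 0 < γ ∧ a = γ • b)
    (a b c d : Y) (hab : a ≠ b)
    (hside : ∃ φ : Y →ₗ[ℝ] ℝ, φ ≠ 0 ∧ φ (b - a) = 0 ∧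
      (0 < φ (c - a) * φ (d - a) ∨ (φ (c - a) = 0 ∧ φ (d - a) = 0)))
    (hac : ‖a - c‖ = ‖a - d‖) (hbc : ‖b - c‖ = ‖b - d‖) : c = d := by
  have := StrictConvexSpace.of_exists_pos_smul hsc
  obtain ⟨φ, hφ, hφab, hcd⟩ := hside
  have hL := φ.ker_eq_span_singleton_of_finrank_eq_two hdim hφ (sub_ne_zero.2 hab.symm) hφab
  rw [← dist_eq_norm, ← dist_eq_norm] at hac hbc
  rcases hcd with hpos | ⟨hc, hd⟩
  · wlog hle : |φ (c - a)| ≤ |φ (d - a)| generalizing c d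
    · exact (this d c hac.symm hbc.symm (by rwa [mul_comm]) (le_of_not_ge hle)).symm
    exact eq_of_dist_eq_of_abs_le hab hL hpos hle hac hbc
  · rw [← mem_affineSpan_pair_iff_apply_sub_eq_zero hL] at hc hd
    exact eq_of_mem_affineSpan_pair_of_dist_eq hab hc hd hac hbc
end

section
/- For any two-dimensional real normed space: if the space satisfies condition (∗) — for any a ≠ b on a line L and any c, d on the same side of L, ||a−c|| = ||a−d|| and ||b−c|| = ||b−d|| imply c = d — then the space is strictly convex. -/
/-- `N` is a norm on `ℝ²`. -/
def IsNorm (N : (Fin 2 → ℝ) → ℝ) : Prop :=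
  (∀ x, 0 ≤ N x) ∧ (∀ x, N x = 0 ↔ x = 0) ∧
  (∀ (c : ℝ) (x), N (c • x) = |c| * N x) ∧ (∀ x y, N (x + y) ≤ N x + N y)

/-- For any two-dimensional real normed space (`ℝ²` with an arbitrary norm `N`): if the
space satisfies condition (∗) — for any `a ≠ b` on a line `L` and any `c, d` on the same
side of `L`, `N (a - c) = N (a - d)` and `N (b - c) = N (b - d)` imply `c = d` — then the
space is strictly convex. -/
theorem condition_star_implies_strictConvex (N : (Fin 2 → ℝ) → ℝ) (hN : IsNorm N)
    (hstar : ∀ a b c d : Fin 2 → ℝ, a ≠ b →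
      (∃ φ : (Fin 2 → ℝ) →ₗ[ℝ] ℝ, φ ≠ 0 ∧ φ (b - a) = 0 ∧
        (0 < φ (c - a) * φ (d - a) ∨ (φ (c - a) = 0 ∧ φ (d - a) = 0))) →
      N (a - c) = N (a - d) → N (b - c) = N (b - d) → c = d) :
    ∀ u v : Fin 2 → ℝ, u ≠ 0 → v ≠ 0 → N (u + v) = N u + N v →
      ∃ γ : ℝ, 0 < γ ∧ u = γ • v := by
  obtain ⟨hpos, hzero, hsmul, htri⟩ := hN
  intro u v hu hv heq
  have hNu : 0 < N u := lt_of_le_of_ne (hpos u) (fun h => hu ((hzero u).mp h.symm))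
  have hNv : 0 < N v := lt_of_le_of_ne (hpos v) (fun h => hv ((hzero v).mp h.symm))
  by_cases hDz : u 0 * v 1 - u 1 * v 0 = 0
  · -- dependent case
    obtain ⟨c, hc⟩ : ∃ c : ℝ, u = c • v := by
      by_cases h0 : v 0 = 0
      · have h1 : v 1 ≠ 0 := by
          intro h1
          exact hv (funext fun i => by fin_cases i <;> simp [h0, h1])
        refine ⟨u 1 / v 1, funext fun i => ?_⟩
        fin_cases i
        · show u 0 = u 1 / v 1 * v 0
          rw [h0] at hDz ⊢
          have : u 0 * v 1 = 0 := by linarith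
          rcases mul_eq_zero.mp this with h | h
          · rw [h, mul_zero]
          · exact absurd h h1
        · show u 1 = u 1 / v 1 * v 1
          field_simp
      · refine ⟨u 0 / v 0, funext fun i => ?_⟩
        fin_cases i
        · show u 0 = u 0 / v 0 * v 0
          field_simp
        · show u 1 = u 0 / v 0 * v 1
          field_simp
          nlinarith [hDz]
    have hc0 : c ≠ 0 := by
      rintro rfl
      simp only [zero_smul] at hc
      exact hu hc
    have h1 : u + v = (c + 1) • v := by rw [hc]; module
    have h2 : N (u + v) = |c + 1| * N v := by rw [h1, hsmul]
    have h3 : N u = |c| * N v := by rw [hc, hsmul]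
    have habs : |c + 1| = |c| + 1 := by
      rw [h2, h3] at heq
      have hvne : N v ≠ 0 := ne_of_gt hNv
      have h4 : |c + 1| * N v = (|c| + 1) * N v := by linarith
      exact mul_right_cancel₀ hvne h4
    have hcpos : 0 < c := by
      rcases lt_or_ge c 0 with h | h
      · rcases abs_cases (c + 1) with ⟨e1, _⟩ | ⟨e1, _⟩ <;>
          rw [abs_of_neg h] at habs <;> linarith
      · exact lt_of_le_of_ne h (Ne.symm hc0)
    exact ⟨c, hcpos, hc⟩
  · -- independent case: derive a contradiction with (∗)
    exfalso
    obtain ⟨p, q, hNp, hNq, hdet, t0, ht0pos, ht0lt1, hmid⟩ :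
        ∃ p q : Fin 2 → ℝ, N p = 1 ∧ N q = 1 ∧ p 0 * q 1 - p 1 * q 0 ≠ 0 ∧
          ∃ t0 : ℝ, 0 < t0 ∧ t0 < 1 ∧ N (t0 • p + (1 - t0) • q) = 1 := by
      have hab : 0 < N u + N v := by linarith
      refine ⟨(N u)⁻¹ • u, (N v)⁻¹ • v, ?_, ?_, ?_, N u / (N u + N v),
        div_pos hNu hab, by rw [div_lt_one hab]; linarith, ?_⟩
      · rw [hsmul, abs_of_pos (inv_pos.mpr hNu)]; field_simp
      · rw [hsmul, abs_of_pos (inv_pos.mpr hNv)]; field_simp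
      · have hcomp : ((N u)⁻¹ • u) 0 * ((N v)⁻¹ • v) 1 - ((N u)⁻¹ • u) 1 * ((N v)⁻¹ • v) 0
            = (N u)⁻¹ * (N v)⁻¹ * (u 0 * v 1 - u 1 * v 0) := by
          simp only [Pi.smul_apply, smul_eq_mul]; ring
        rw [hcomp]
        exact mul_ne_zero (mul_ne_zero (inv_ne_zero (ne_of_gt hNu))
          (inv_ne_zero (ne_of_gt hNv))) hDz
      · have hx : (N u / (N u + N v)) • (N u)⁻¹ • u
            + (1 - N u / (N u + N v)) • (N v)⁻¹ • v
            = (N u + N v)⁻¹ • (u + v) := by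
          match_scalars <;> field_simp <;> ring
        rw [hx, hsmul, abs_of_pos (inv_pos.mpr hab), heq]
        field_simp
    have hseg : ∀ s : ℝ, 0 ≤ s → s ≤ 1 → N (s • p + (1 - s) • q) = 1 := by
      intro s hs0 hs1
      have hupper : N (s • p + (1 - s) • q) ≤ 1 := by
        calc N (s • p + (1 - s) • q) ≤ N (s • p) + N ((1 - s) • q) := htri _ _
          _ = |s| * N p + |1 - s| * N q := by rw [hsmul s p, hsmul (1 - s) q]
          _ = 1 := by
              rw [hNp, hNq, abs_of_nonneg hs0, abs_of_nonneg (by linarith)]; ring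
      have hlower : 1 ≤ N (s • p + (1 - s) • q) := by
        rcases le_total s t0 with hst | hst
        · have hs1' : s < 1 := lt_of_le_of_lt hst ht0lt1
          have hsne : (1 : ℝ) - s ≠ 0 := by intro h; linarith [h]
          set l : ℝ := (t0 - s) / (1 - s) with hl
          have hl0 : 0 ≤ l := div_nonneg (by linarith) (by linarith)
          have hl1 : l < 1 := by
            rw [hl, div_lt_one (by linarith)]; linarith
          have hcomb : t0 • p + (1 - t0) • q
              = l • p + (1 - l) • (s • p + (1 - s) • q) := by
            rw [hl]
            match_scalars <;> field_simp <;> ring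
          have hle : N (t0 • p + (1 - t0) • q)
              ≤ l * 1 + (1 - l) * N (s • p + (1 - s) • q) := by
            rw [hcomb]
            calc N (l • p + (1 - l) • (s • p + (1 - s) • q))
                ≤ N (l • p) + N ((1 - l) • (s • p + (1 - s) • q)) := htri _ _
              _ = |l| * N p + |1 - l| * N (s • p + (1 - s) • q) := by
                  rw [hsmul l p, hsmul (1 - l) (s • p + (1 - s) • q)]
              _ = l * 1 + (1 - l) * N (s • p + (1 - s) • q) := by
                  rw [hNp, abs_of_nonneg hl0, abs_of_nonneg (by linarith)]
          rw [hmid] at hle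
          nlinarith
        · have hs0' : 0 < s := lt_of_lt_of_le ht0pos hst
          have hsne : s ≠ 0 := ne_of_gt hs0'
          set l : ℝ := (s - t0) / s with hl
          have hl0 : 0 ≤ l := div_nonneg (by linarith) (by linarith)
          have hl1 : l < 1 := by
            rw [hl, div_lt_one hs0']; linarith
          have hcomb : t0 • p + (1 - t0) • q
              = l • q + (1 - l) • (s • p + (1 - s) • q) := by
            rw [hl]
            match_scalars <;> field_simp <;> ring
          have hle : N (t0 • p + (1 - t0) • q)
              ≤ l * 1 + (1 - l) * N (s • p + (1 - s) • q) := by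
            rw [hcomb]
            calc N (l • q + (1 - l) • (s • p + (1 - s) • q))
                ≤ N (l • q) + N ((1 - l) • (s • p + (1 - s) • q)) := htri _ _
              _ = |l| * N q + |1 - l| * N (s • p + (1 - s) • q) := by
                  rw [hsmul l q, hsmul (1 - l) (s • p + (1 - s) • q)]
              _ = l * 1 + (1 - l) * N (s • p + (1 - s) • q) := by
                  rw [hNq, abs_of_nonneg hl0, abs_of_nonneg (by linarith)]
          rw [hmid] at hle
          nlinarith
      linarith
    have hseg34 : N ((3/4 : ℝ) • p + (1/4 : ℝ) • q) = 1 := by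
      have := hseg (3/4) (by norm_num) (by norm_num)
      norm_num at this
      convert this using 3
    have hseg14 : N ((1/4 : ℝ) • p + (3/4 : ℝ) • q) = 1 := by
      have := hseg (1/4) (by norm_num) (by norm_num)
      norm_num at this
      convert this using 3
    -- the linear functional vanishing on the line through 0 and p + q
    let φ : (Fin 2 → ℝ) →ₗ[ℝ] ℝ :=
      (p 1 + q 1) • (LinearMap.proj 0 : ((Fin 2 → ℝ) →ₗ[ℝ] ℝ))
        - (p 0 + q 0) • (LinearMap.proj 1 : ((Fin 2 → ℝ) →ₗ[ℝ] ℝ))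
    have hφx : ∀ x : Fin 2 → ℝ, φ x = (p 1 + q 1) * x 0 - (p 0 + q 0) * x 1 := by
      intro x
      simp [φ, LinearMap.proj]
    have hφp : φ p = p 0 * q 1 - p 1 * q 0 := by rw [hφx]; ring
    have hab' : (0 : Fin 2 → ℝ) ≠ p + q := by
      intro h
      have h0 := congrFun h 0
      have h1 := congrFun h 1
      simp only [Pi.add_apply, Pi.zero_apply] at h0 h1
      have e0 : q 0 = -p 0 := by linarith
      have e1 : q 1 = -p 1 := by linarith
      apply hdet
      rw [e0, e1]; ring
    have hkey : p = (3/4 : ℝ) • p + (1/4 : ℝ) • q := by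
      apply hstar 0 (p + q) p ((3/4 : ℝ) • p + (1/4 : ℝ) • q) hab'
      · refine ⟨φ, ?_, ?_, ?_⟩
        · intro h
          apply hdet
          rw [← hφp, h]
          simp
        · have e : p + q - 0 = p + q := by simp
          rw [e, hφx]
          simp only [Pi.add_apply]
          ring
        · left
          have e1 : p - (0 : Fin 2 → ℝ) = p := by simp
          have e2 : (3/4 : ℝ) • p + (1/4 : ℝ) • q - (0 : Fin 2 → ℝ)
              = (3/4 : ℝ) • p + (1/4 : ℝ) • q := by simp
          have hφd : φ ((3/4 : ℝ) • p + (1/4 : ℝ) • q)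
              = (1/2) * (p 0 * q 1 - p 1 * q 0) := by
            rw [hφx]
            simp only [Pi.add_apply, Pi.smul_apply, smul_eq_mul]
            ring
          rw [e1, e2, hφp, hφd]
          rcases hdet.lt_or_gt with h | h <;> nlinarith
      · have e1 : (0 : Fin 2 → ℝ) - p = (-1 : ℝ) • p := by module
        have e2 : (0 : Fin 2 → ℝ) - ((3/4 : ℝ) • p + (1/4 : ℝ) • q)
            = (-1 : ℝ) • ((3/4 : ℝ) • p + (1/4 : ℝ) • q) := by module
        rw [e1, e2, hsmul (-1 : ℝ) p,
          hsmul (-1 : ℝ) ((3/4 : ℝ) • p + (1/4 : ℝ) • q), hNp, hseg34]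
      · have e1 : p + q - p = q := by module
        have e2 : p + q - ((3/4 : ℝ) • p + (1/4 : ℝ) • q)
            = (1/4 : ℝ) • p + (3/4 : ℝ) • q := by module
        rw [e1, e2, hNq, hseg14]
    -- p = (3/4)p + (1/4)q forces p = q, contradicting independence
    apply hdet
    have h0 := congrFun hkey 0
    have h1 := congrFun hkey 1
    simp only [Pi.add_apply, Pi.smul_apply, smul_eq_mul] at h0 h1
    have e0 : p 0 = q 0 := by linarith
    have e1 : p 1 = q 1 := by linarith
    rw [e0, e1]; ring
end

section
/- Let ℝ² be equipped with a strictly convex norm ||·|| and let d > 0. For any a, b ∈ ℝ² with ||a|| = ||b|| = ||a−b|| = d, there exist ã, b̃ ∈ ℝ² with ||ã|| = ||b̃|| = ||ã−b̃|| = ||(ã+b̃)−(a+b)|| = d. -/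
open Real Set Filter Bornology Topology

set_option maxHeartbeats 1000000

namespace RhombusAux

variable {N : (Fin 2 → ℝ) → ℝ}


def det2 (u v : Fin 2 → ℝ) : ℝ := u 0 * v 1 - u 1 * v 0

def rot (x : Fin 2 → ℝ) : Fin 2 → ℝ := ![-(x 1), x 0]

variable {N : (Fin 2 → ℝ) → ℝ}

lemma N_pos (hN : IsNorm N) {x : Fin 2 → ℝ} (hx : x ≠ 0) : 0 < N x := by
  rcases (hN.1 x).lt_or_eq with h | h
  · exact h
  · exact absurd ((hN.2.1 x).1 h.symm) hx

lemma N_neg (hN : IsNorm N) (x : Fin 2 → ℝ) : N (-x) = N x := by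
  have := hN.2.2.1 (-1) x
  simpa using this

lemma N_continuous (hN : IsNorm N) : Continuous N := by
  obtain ⟨h0, h1, h2, h3⟩ := hN
  have hdecomp : ∀ v : Fin 2 → ℝ, v = v 0 • ![(1:ℝ),0] + v 1 • ![(0:ℝ),1] := by
    intro v; funext i; fin_cases i <;> simp
  set C : ℝ := N ![(1:ℝ),0] + N ![(0:ℝ),1] with hC
  have hCnn : 0 ≤ C := add_nonneg (h0 _) (h0 _)
  have key : ∀ x y : Fin 2 → ℝ, N x - N y ≤ C * dist x y := by
    intro x y
    have h4 : N x ≤ N y + N (x - y) := by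
      have := h3 y (x - y); simpa using this
    have h5 : N (x - y) ≤ C * dist x y := by
      calc N (x - y) = N ((x-y) 0 • ![(1:ℝ),0] + (x-y) 1 • ![(0:ℝ),1]) := by
              rw [← hdecomp]
        _ ≤ N ((x-y) 0 • ![(1:ℝ),0]) + N ((x-y) 1 • ![(0:ℝ),1]) := h3 _ _
        _ = |(x-y) 0| * N ![(1:ℝ),0] + |(x-y) 1| * N ![(0:ℝ),1] := by rw [h2, h2]
        _ ≤ dist x y * N ![(1:ℝ),0] + dist x y * N ![(0:ℝ),1] := by
              have d0 : |(x-y) 0| ≤ dist x y := by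
                have := norm_le_pi_norm (x - y) 0
                simpa [Real.norm_eq_abs, dist_eq_norm] using this
              have d1 : |(x-y) 1| ≤ dist x y := by
                have := norm_le_pi_norm (x - y) 1
                simpa [Real.norm_eq_abs, dist_eq_norm] using this
              gcongr <;> exact h0 _
        _ = C * dist x y := by ring
    linarith
  rw [Metric.continuous_iff]
  intro x ε hε
  by_cases hC0 : C = 0
  · refine ⟨1, one_pos, fun y _ => ?_⟩
    have k1 := key y x; have k2 := key x y
    rw [hC0] at k1 k2
    have : dist (N y) (N x) = |N y - N x| := Real.dist_eq _ _
    rw [this, abs_sub_lt_iff]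
    constructor <;> nlinarith [dist_comm y x]
  · have hCpos : 0 < C := lt_of_le_of_ne hCnn (Ne.symm hC0)
    refine ⟨ε / C, div_pos hε hCpos, fun y hy => ?_⟩
    have k1 := key y x; have k2 := key x y
    rw [dist_comm x y] at k2
    have hlt : C * dist y x < ε := by
      have := mul_lt_mul_of_pos_left hy hCpos
      rwa [show C * (ε / C) = ε by field_simp] at this
    rw [Real.dist_eq, abs_sub_lt_iff]
    constructor <;> linarith

lemma rot_indep {y : Fin 2 → ℝ} (hy : y ≠ 0) {c s : ℝ}
    (h : c • y + s • rot y = 0) : c = 0 ∧ s = 0 := by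
  have h0 : c * y 0 - s * y 1 = 0 := by
    have := congrFun h 0; simpa [rot, sub_eq_add_neg] using this
  have h1 : c * y 1 + s * y 0 = 0 := by
    have := congrFun h 1; simpa [rot] using this
  have hy2 : 0 < y 0 ^ 2 + y 1 ^ 2 := by
    rcases Function.ne_iff.1 hy with ⟨i, hi⟩
    fin_cases i <;> simp at hi <;> positivity
  constructor
  · have hc : c * (y 0 ^ 2 + y 1 ^ 2) = 0 := by linear_combination y 0 * h0 + y 1 * h1
    exact (mul_eq_zero.1 hc).resolve_right (ne_of_gt hy2)
  · have hs : s * (y 0 ^ 2 + y 1 ^ 2) = 0 := by linear_combination (- y 1) * h0 + y 0 * h1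
    exact (mul_eq_zero.1 hs).resolve_right (ne_of_gt hy2)


lemma partner_unique_aux (hN : IsNorm N)
    (hsc : ∀ u v : Fin 2 → ℝ, u ≠ 0 → v ≠ 0 → N (u + v) = N u + N v →
      ∃ γ : ℝ, 0 < γ ∧ u = γ • v)
    {d : ℝ} (hd : 0 < d) {x z1 z2 : Fin 2 → ℝ}
    (hx : N x = d) (h1 : N z1 = d) (h2 : N z2 = d)
    (hx1 : N (x - z1) = d) (hx2 : N (x - z2) = d)
    (hdet1 : 0 < det2 x z1) (hdet2 : 0 < det2 x z2)
    (h12 : 0 ≤ det2 z1 z2) : z1 = z2 := by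
  obtain ⟨hn0, hn1, hn2, hn3⟩ := hN
  obtain ⟨D, hD⟩ : ∃ D : ℝ, D = det2 x z1 := ⟨_, rfl⟩
  have hDpos : 0 < D := by rw [hD]; exact hdet1
  have hDne : D ≠ 0 := ne_of_gt hDpos
  obtain ⟨p, hp⟩ : ∃ p : ℝ, p = -(det2 z1 z2) / D := ⟨_, rfl⟩
  obtain ⟨q, hq⟩ : ∃ q : ℝ, q = det2 x z2 / D := ⟨_, rfl⟩
  have hp0 : p ≤ 0 := by
    rw [hp]; exact div_nonpos_iff.2 (Or.inr ⟨by linarith, le_of_lt hDpos⟩)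
  have hq0 : 0 < q := by rw [hq]; exact div_pos hdet2 hDpos
  have hrep : z2 = p • x + q • z1 := by
    have c0 : z2 0 = p * x 0 + q * z1 0 := by
      rw [hp, hq, div_mul_eq_mul_div, div_mul_eq_mul_div, ← add_div,
        eq_div_iff hDne, hD]
      simp only [det2]; ring
    have c1 : z2 1 = p * x 1 + q * z1 1 := by
      rw [hp, hq, div_mul_eq_mul_div, div_mul_eq_mul_div, ← add_div,
        eq_div_iff hDne, hD]
      simp only [det2]; ring
    funext i
    fin_cases i
    · simpa using c0
    · simpa using c1
  obtain ⟨s, hs⟩ : ∃ s : ℝ, s = 1 / (1 - p) := ⟨_, rfl⟩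
  have h1p : (1:ℝ) ≤ 1 - p := by linarith
  have hs0 : 0 < s := by rw [hs]; positivity
  have hs1 : s ≤ 1 := by rw [hs]; rw [div_le_one (by linarith)]; linarith
  have hsp : s * (1 - p) = 1 := by rw [hs]; field_simp
  obtain ⟨β, hβ⟩ : ∃ β : ℝ, β = s * q := ⟨_, rfl⟩
  have hβ0 : 0 < β := by rw [hβ]; exact mul_pos hs0 hq0
  obtain ⟨w, hw⟩ : ∃ w : Fin 2 → ℝ, w = β • z1 := ⟨_, rfl⟩
  have hw_seg : (1 - s) • x + s • z2 = w := by
    rw [hrep, hw, hβ]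
    have hcoef : 1 - s + s * p = 0 := by nlinarith
    calc (1-s) • x + s • (p • x + q • z1)
        = (1 - s + s * p) • x + (s * q) • z1 := by module
      _ = (s * q) • z1 := by rw [hcoef, zero_smul, zero_add]
  have hNw : N w = β * d := by
    rw [hw, hn2, h1, abs_of_pos hβ0]
  have hNw' : N w ≤ d := by
    rw [← hw_seg]
    calc N ((1-s) • x + s • z2) ≤ N ((1-s) • x) + N (s • z2) := hn3 _ _
      _ = |1-s| * d + |s| * d := by rw [hn2, hn2, hx, h2]
      _ = (1-s) * d + s * d := by
            rw [abs_of_nonneg (by linarith), abs_of_pos hs0]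
      _ = d := by ring
  have hβ1 : β ≤ 1 := by
    rw [hNw] at hNw'; nlinarith
  have hxw : x - w = s • (x - z2) := by rw [← hw_seg]; module
  have hwz1 : w - z1 = (β - 1) • z1 := by rw [hw]; module
  have hchainA : β ≤ s := by
    have t1 : N (x - z1) ≤ N (x - w) + N (w - z1) := by
      have := hn3 (x - w) (w - z1); simpa using this
    rw [hx1, hxw, hwz1, hn2, hn2, hx2, h1, abs_of_pos hs0,
      abs_of_nonpos (by linarith : β - 1 ≤ 0)] at t1
    nlinarith [t1]
  have hz2w : z2 - w = (1 - s) • (z2 - x) := by rw [← hw_seg]; module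
  have hchainB : s ≤ β := by
    have t2 : N z2 ≤ N (z2 - w) + N w := by
      have := hn3 (z2 - w) w; simpa using this
    rw [h2, hz2w, hn2, hNw, abs_of_nonneg (by linarith : (0:ℝ) ≤ 1 - s)] at t2
    have hNzx : N (z2 - x) = d := by
      have : z2 - x = -(x - z2) := by ring
      rw [this, show N (-(x - z2)) = N (x - z2) from by
        simpa using hn2 (-1) (x - z2), hx2]
    rw [hNzx] at t2
    nlinarith [t2]
  have hβs : β = s := le_antisymm hchainA hchainB
  -- now equality case
  by_cases hsone : s = 1
  · -- w = z2 directly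
    have hzw : z2 = w := by rw [← hw_seg, hsone]; module
    have hzb : z2 = β • z1 := by rw [hzw, hw]
    have e : N z2 = β * d := by rw [hzb, hn2, h1, abs_of_pos hβ0]
    have hβd : β * d = d := by rw [← e, h2]
    have hβe : β = (1:ℝ) := by nlinarith
    rw [hzb, hβe, one_smul]
  · have hslt : s < 1 := lt_of_le_of_ne hs1 hsone
    have hz2x : z2 ≠ x := by
      intro h; rw [h] at hdet2
      have : det2 x x = 0 := by simp only [det2]; ring
      rw [this] at hdet2; exact lt_irrefl 0 hdet2
    have hu_ne : z2 - w ≠ 0 := by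
      rw [hz2w]
      intro h
      have := smul_eq_zero.1 h
      rcases this with h' | h'
      · linarith [h']
      · exact hz2x (by rwa [sub_eq_zero] at h')
    have hw_ne : w ≠ 0 := by
      intro h
      have hz : N (0 : Fin 2 → ℝ) = 0 := (hn1 0).2 rfl
      rw [h, hz] at hNw
      exact absurd hNw.symm (ne_of_gt (mul_pos hβ0 hd))
    have hsum : N ((z2 - w) + w) = N (z2 - w) + N w := by
      have e1 : (z2 - w) + w = z2 := by ring
      rw [e1, h2, hz2w, hn2, hNw, abs_of_nonneg (by linarith : (0:ℝ) ≤ 1 - s)]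
      have hNzx : N (z2 - x) = d := by
        have e2 : z2 - x = -(x - z2) := by ring
        rw [e2, show N (-(x - z2)) = N (x - z2) from by
          simpa using hn2 (-1) (x - z2), hx2]
      rw [hNzx, hβs]; ring
    obtain ⟨γ, hγ0, hγ⟩ := hsc (z2 - w) w hu_ne hw_ne hsum
    have hz2 : z2 = ((1 + γ) * β) • z1 := by
      have : z2 = (1 + γ) • w := by
        rw [add_smul, one_smul]; rw [← hγ]; ring
      rw [this, hw, smul_smul]
    have hcoef_pos : 0 < (1 + γ) * β := by positivity
    have hcoef1 : (1 + γ) * β = 1 := by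
      have e : N z2 = ((1 + γ) * β) * d := by
        rw [hz2, hn2, h1, abs_of_pos hcoef_pos]
      rw [h2] at e
      exact mul_right_cancel₀ (ne_of_gt hd) (by rw [one_mul]; exact e.symm)
    rw [hz2, hcoef1, one_smul]

lemma partner_unique (hN : IsNorm N)
    (hsc : ∀ u v : Fin 2 → ℝ, u ≠ 0 → v ≠ 0 → N (u + v) = N u + N v →
      ∃ γ : ℝ, 0 < γ ∧ u = γ • v)
    {d : ℝ} (hd : 0 < d) {x z1 z2 : Fin 2 → ℝ}
    (hx : N x = d) (h1 : N z1 = d) (h2 : N z2 = d)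
    (hx1 : N (x - z1) = d) (hx2 : N (x - z2) = d)
    (hdet1 : 0 < det2 x z1) (hdet2 : 0 < det2 x z2) : z1 = z2 := by
  rcases le_total 0 (det2 z1 z2) with h | h
  · exact partner_unique_aux hN hsc hd hx h1 h2 hx1 hx2 hdet1 hdet2 h
  · refine (partner_unique_aux hN hsc hd hx h2 h1 hx2 hx1 hdet2 hdet1 ?_).symm
    have : det2 z2 z1 = -(det2 z1 z2) := by simp [det2]; ring
    rw [this]; linarith


lemma sq_sum_pos {y : Fin 2 → ℝ} (hy : y ≠ 0) : 0 < y 0 ^ 2 + y 1 ^ 2 := by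
  rcases Function.ne_iff.1 hy with ⟨i, hi⟩
  fin_cases i <;> simp at hi <;> positivity

lemma det2_smul_right (y w : Fin 2 → ℝ) (k : ℝ) : det2 y (k • w) = k * det2 y w := by
  simp only [det2, Pi.smul_apply, smul_eq_mul]; ring

lemma det2_rot_combo (y : Fin 2 → ℝ) (c s : ℝ) :
    det2 y (c • y + s • rot y) = s * (y 0 ^ 2 + y 1 ^ 2) := by
  simp only [det2, rot, Pi.add_apply, Pi.smul_apply, smul_eq_mul,
    Matrix.cons_val_zero, Matrix.cons_val_one, Matrix.head_cons]
  ring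

lemma indep_ab (hN : IsNorm N) {d : ℝ} {a b : Fin 2 → ℝ} (hd : 0 < d)
    (ha : N a = d) (hb : N b = d) (hab : N (a - b) = d) :
    ∀ c s : ℝ, c • a + s • b = 0 → c = 0 ∧ s = 0 := by
  obtain ⟨hn0, hn1, hn2, hn3⟩ := hN
  have hNzero : N (0 : Fin 2 → ℝ) = 0 := (hn1 0).2 rfl
  have ha0 : a ≠ 0 := by
    intro h; rw [h, hNzero] at ha; exact (ne_of_lt hd) ha
  intro c s h
  by_cases hs : s = 0
  · refine ⟨?_, hs⟩
    rw [hs, zero_smul, add_zero] at h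
    rcases smul_eq_zero.1 h with h' | h'
    · exact h'
    · exact absurd h' ha0
  · exfalso
    have hsb : s • b = -(c • a) := eq_neg_of_add_eq_zero_right h
    have hsb' : s • b = (-c) • a := by rw [neg_smul]; exact hsb
    have hbt : b = (s⁻¹ * (-c)) • a := by
      rw [mul_smul, ← hsb', inv_smul_smul₀ hs]
    have habs : N b = |s⁻¹ * (-c)| * N a := by rw [hbt, hn2]
    rw [ha, hb] at habs
    have habs1 : |s⁻¹ * (-c)| = 1 := by
      refine mul_right_cancel₀ (ne_of_gt hd) ?_
      rw [one_mul]; exact habs.symm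
    rcases (abs_eq (by norm_num : (0:ℝ) ≤ 1)).1 habs1 with ht | ht
    · rw [ht, one_smul] at hbt
      rw [hbt, sub_self, hNzero] at hab
      exact (ne_of_lt hd) hab
    · rw [ht, neg_one_smul] at hbt
      have e2 : a - b = (2:ℝ) • a := by rw [hbt]; module
      rw [e2, hn2, ha] at hab
      have h2 : |(2:ℝ)| = 2 := by norm_num
      rw [h2] at hab; linarith

noncomputable def uf (a b : Fin 2 → ℝ) (θ : ℝ) : Fin 2 → ℝ :=
  Real.cos θ • a + Real.sin θ • b

noncomputable def xf (N : (Fin 2 → ℝ) → ℝ) (d : ℝ) (a b : Fin 2 → ℝ) (θ : ℝ) : Fin 2 → ℝ :=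
  (d / N (uf a b θ)) • uf a b θ

noncomputable def vf (N : (Fin 2 → ℝ) → ℝ) (d : ℝ) (a b : Fin 2 → ℝ) (θ φ : ℝ) : Fin 2 → ℝ :=
  Real.cos φ • xf N d a b θ + Real.sin φ • rot (xf N d a b θ)

noncomputable def zf (N : (Fin 2 → ℝ) → ℝ) (d : ℝ) (a b : Fin 2 → ℝ) (θ φ : ℝ) : Fin 2 → ℝ :=
  (d / N (vf N d a b θ φ)) • vf N d a b θ φ

lemma main (N : (Fin 2 → ℝ) → ℝ) (hN : IsNorm N)
    (hsc : ∀ u v : Fin 2 → ℝ, u ≠ 0 → v ≠ 0 → N (u + v) = N u + N v →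
      ∃ γ : ℝ, 0 < γ ∧ u = γ • v)
    (d : ℝ) (hd : 0 < d) (a b : Fin 2 → ℝ)
    (ha : N a = d) (hb : N b = d) (hab : N (a - b) = d)
    (hdet : 0 < det2 a b) :
    ∃ a' b' : Fin 2 → ℝ, N a' = d ∧ N b' = d ∧ N (a' - b') = d ∧
      N ((a' + b') - (a + b)) = d := by
  obtain ⟨hn0, hn1, hn2, hn3⟩ := hN
  have hN' : IsNorm N := ⟨hn0, hn1, hn2, hn3⟩
  have hcont : Continuous N := N_continuous hN'
  have hNzero : N (0 : Fin 2 → ℝ) = 0 := (hn1 0).2 rfl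
  have hNneg : ∀ y : Fin 2 → ℝ, N (-y) = N y := N_neg hN'
  have hindep : ∀ c s : ℝ, c • a + s • b = 0 → c = 0 ∧ s = 0 :=
    indep_ab hN' hd ha hb hab
  -- the path x
  have hu0 : ∀ θ : ℝ, uf a b θ ≠ 0 := by
    intro θ h
    obtain ⟨hc, hs⟩ := hindep _ _ h
    have := Real.sin_sq_add_cos_sq θ
    rw [hc, hs] at this; norm_num at this
  have hNu : ∀ θ, 0 < N (uf a b θ) := fun θ => N_pos hN' (hu0 θ)
  have hscale : ∀ y : Fin 2 → ℝ, y ≠ 0 → N ((d / N y) • y) = d := by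
    intro y hy
    rw [hn2, abs_of_pos (div_pos hd (N_pos hN' hy)),
      div_mul_cancel₀ _ (ne_of_gt (N_pos hN' hy))]
  have hNx : ∀ θ, N (xf N d a b θ) = d := fun θ => hscale _ (hu0 θ)
  have hx_ne : ∀ θ, xf N d a b θ ≠ 0 := by
    intro θ h
    have := hNx θ; rw [h, hNzero] at this; exact (ne_of_lt hd) this
  have hx0 : xf N d a b 0 = a := by
    have hu : uf a b 0 = a := by
      simp only [uf, Real.cos_zero, Real.sin_zero, one_smul, zero_smul, add_zero]
    simp only [xf, hu, ha, div_self (ne_of_gt hd), one_smul]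
  have hxpi : xf N d a b π = -a := by
    have hu : uf a b π = -a := by
      simp only [uf, Real.cos_pi, Real.sin_pi, zero_smul, add_zero, neg_one_smul]
    simp only [xf, hu, hNneg a, ha, div_self (ne_of_gt hd), one_smul]
  -- v and z
  have hv0 : ∀ θ φ, vf N d a b θ φ ≠ 0 := by
    intro θ φ h
    obtain ⟨hc, hs⟩ := rot_indep (hx_ne θ) h
    have := Real.sin_sq_add_cos_sq φ
    rw [hc, hs] at this; norm_num at this
  have hNv : ∀ θ φ, 0 < N (vf N d a b θ φ) := fun θ φ => N_pos hN' (hv0 θ φ)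
  have hNz : ∀ θ φ, N (zf N d a b θ φ) = d := fun θ φ => hscale _ (hv0 θ φ)
  have hz0 : ∀ θ, zf N d a b θ 0 = xf N d a b θ := by
    intro θ
    have hv : vf N d a b θ 0 = xf N d a b θ := by
      simp only [vf, Real.cos_zero, Real.sin_zero, one_smul, zero_smul, add_zero]
    simp only [zf, hv, hNx θ, div_self (ne_of_gt hd), one_smul]
  have hzpi : ∀ θ, zf N d a b θ π = -(xf N d a b θ) := by
    intro θ
    have hv : vf N d a b θ π = -(xf N d a b θ) := by
      simp only [vf, Real.cos_pi, Real.sin_pi, zero_smul, add_zero, neg_one_smul]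
    simp only [zf, hv, hNneg, hNx θ, div_self (ne_of_gt hd), one_smul]
  have hdetz : ∀ θ φ, det2 (xf N d a b θ) (zf N d a b θ φ) =
      (d / N (vf N d a b θ φ)) *
        (Real.sin φ * ((xf N d a b θ 0) ^ 2 + (xf N d a b θ 1) ^ 2)) := by
    intro θ φ
    rw [show zf N d a b θ φ = (d / N (vf N d a b θ φ)) • vf N d a b θ φ from rfl,
      det2_smul_right, show vf N d a b θ φ = Real.cos φ • xf N d a b θ +
        Real.sin φ • rot (xf N d a b θ) from rfl, det2_rot_combo]
  have hdetz_pos : ∀ θ, ∀ ψ ∈ Ioo (0:ℝ) π, 0 < det2 (xf N d a b θ) (zf N d a b θ ψ) := by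
    intro θ ψ hψ
    rw [hdetz θ ψ]
    exact mul_pos (div_pos hd (hNv θ ψ))
      (mul_pos (Real.sin_pos_of_pos_of_lt_pi hψ.1 hψ.2) (sq_sum_pos (hx_ne θ)))
  -- continuity facts
  have hcontu : Continuous (uf a b) :=
    (Real.continuous_cos.smul continuous_const).add (Real.continuous_sin.smul continuous_const)
  have hcontx : Continuous (xf N d a b) :=
    (continuous_const.div (hcont.comp hcontu) (fun θ => ne_of_gt (hNu θ))).smul hcontu
  have hcontrot : Continuous rot := by
    apply continuous_pi
    intro i
    fin_cases i
    · simp [rot]; exact (continuous_apply (1 : Fin 2)).neg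
    · simpa [rot] using (continuous_apply (0 : Fin 2))
  have hcontv : Continuous (fun q : ℝ × ℝ => vf N d a b q.1 q.2) :=
    ((Real.continuous_cos.comp continuous_snd).smul (hcontx.comp continuous_fst)).add
      ((Real.continuous_sin.comp continuous_snd).smul
        (hcontrot.comp (hcontx.comp continuous_fst)))
  have hcontz : Continuous (fun q : ℝ × ℝ => zf N d a b q.1 q.2) :=
    (continuous_const.div (hcont.comp hcontv) (fun q => ne_of_gt (hNv q.1 q.2))).smul hcontv
  have hcontF : Continuous (fun q : ℝ × ℝ => N (xf N d a b q.1 - zf N d a b q.1 q.2)) :=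
    hcont.comp ((hcontx.comp continuous_fst).sub hcontz)
  -- existence of the partner angle
  have hex : ∀ θ : ℝ, ∃ φ, φ ∈ Icc (0:ℝ) π ∧ N (xf N d a b θ - zf N d a b θ φ) = d := by
    intro θ
    have hconφ : ContinuousOn (fun φ => N (xf N d a b θ - zf N d a b θ φ)) (Icc 0 π) :=
      (hcontF.comp (continuous_const.prodMk continuous_id)).continuousOn
    have h0 : N (xf N d a b θ - zf N d a b θ 0) = 0 := by
      rw [hz0 θ, sub_self, hNzero]
    have hπ : N (xf N d a b θ - zf N d a b θ π) = 2 * d := by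
      rw [hzpi θ, sub_neg_eq_add, show xf N d a b θ + xf N d a b θ = (2:ℝ) • xf N d a b θ from
        (two_smul ℝ _).symm, hn2, hNx θ]
      norm_num
    have hsub := intermediate_value_Icc (le_of_lt Real.pi_pos) hconφ
    have hmem : d ∈ Icc (N (xf N d a b θ - zf N d a b θ 0))
        (N (xf N d a b θ - zf N d a b θ π)) := by
      rw [h0, hπ]; exact ⟨hd.le, by linarith⟩
    obtain ⟨φ, hφ, heq⟩ := hsub hmem
    exact ⟨φ, hφ, heq⟩
  choose Φ hΦmem hΦd using hex
  -- the partner angle is interior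
  have hIoo : ∀ θ ψ, ψ ∈ Icc (0:ℝ) π → N (xf N d a b θ - zf N d a b θ ψ) = d →
      ψ ∈ Ioo (0:ℝ) π := by
    intro θ ψ hψ heq
    refine ⟨lt_of_le_of_ne hψ.1 ?_, lt_of_le_of_ne hψ.2 ?_⟩
    · intro h
      rw [← h, hz0 θ, sub_self, hNzero] at heq
      exact (ne_of_lt hd) heq
    · intro h
      rw [h, hzpi θ, sub_neg_eq_add, show xf N d a b θ + xf N d a b θ =
        (2:ℝ) • xf N d a b θ from (two_smul ℝ _).symm, hn2, hNx θ] at heq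
      have h2 : |(2:ℝ)| = 2 := by norm_num
      rw [h2] at heq; linarith
  have hΦIoo : ∀ θ, Φ θ ∈ Ioo (0:ℝ) π := fun θ => hIoo θ _ (hΦmem θ) (hΦd θ)
  -- uniqueness of the partner angle
  have huniq : ∀ θ ψ, ψ ∈ Icc (0:ℝ) π → N (xf N d a b θ - zf N d a b θ ψ) = d →
      ψ = Φ θ := by
    intro θ ψ hmem heq
    have hψIoo := hIoo θ ψ hmem heq
    have hzz : zf N d a b θ ψ = zf N d a b θ (Φ θ) :=
      partner_unique hN' hsc hd (hNx θ) (hNz θ ψ) (hNz θ (Φ θ)) heq (hΦd θ)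
        (hdetz_pos θ ψ hψIoo) (hdetz_pos θ _ (hΦIoo θ))
    obtain ⟨n1, hn1v⟩ : ∃ n1 : ℝ, n1 = N (vf N d a b θ ψ) := ⟨_, rfl⟩
    obtain ⟨n2, hn2v⟩ : ∃ n2 : ℝ, n2 = N (vf N d a b θ (Φ θ)) := ⟨_, rfl⟩
    have hn1pos : 0 < n1 := by rw [hn1v]; exact hNv θ ψ
    have hn2pos : 0 < n2 := by rw [hn2v]; exact hNv θ (Φ θ)
    have hzψ : zf N d a b θ ψ = (d / n1) • vf N d a b θ ψ := by rw [hn1v]; rfl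
    have hzΦ : zf N d a b θ (Φ θ) = (d / n2) • vf N d a b θ (Φ θ) := by rw [hn2v]; rfl
    obtain ⟨k, hkdef⟩ : ∃ k : ℝ, k = n1 / n2 := ⟨_, rfl⟩
    have hk0 : 0 < k := by rw [hkdef]; exact div_pos hn1pos hn2pos
    have hk : vf N d a b θ ψ = k • vf N d a b θ (Φ θ) := by
      have t : (n1 / d) • zf N d a b θ ψ = (n1 / d) • zf N d a b θ (Φ θ) := by rw [hzz]
      rw [hzψ, hzΦ, smul_smul, smul_smul,
        show n1 / d * (d / n1) = 1 from by
          rw [div_mul_div_comm, mul_comm n1 d,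
            div_self (mul_ne_zero (ne_of_gt hd) (ne_of_gt hn1pos))],
        one_smul,
        show n1 / d * (d / n2) = n1 / n2 from by
          rw [div_mul_div_comm, mul_comm n1 d, mul_div_mul_left _ _ (ne_of_gt hd)]] at t
      rw [hkdef]; exact t
    have hcomb : (Real.cos ψ - k * Real.cos (Φ θ)) • xf N d a b θ +
        (Real.sin ψ - k * Real.sin (Φ θ)) • rot (xf N d a b θ) = 0 := by
      have e : (Real.cos ψ - k * Real.cos (Φ θ)) • xf N d a b θ +
          (Real.sin ψ - k * Real.sin (Φ θ)) • rot (xf N d a b θ) =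
          vf N d a b θ ψ - k • vf N d a b θ (Φ θ) := by
        simp only [vf]; module
      rw [e, hk]
      exact sub_self _
    obtain ⟨hc1, hs1⟩ := rot_indep (hx_ne θ) hcomb
    have hc1' : Real.cos ψ = k * Real.cos (Φ θ) := by linarith
    have hs1' : Real.sin ψ = k * Real.sin (Φ θ) := by linarith
    have hk2 : k ^ 2 = 1 := by
      have t := Real.sin_sq_add_cos_sq ψ
      rw [hs1', hc1'] at t
      have t2 := Real.sin_sq_add_cos_sq (Φ θ)
      linear_combination t - k ^ 2 * t2
    have hk1 : k = 1 := by
      have hfac : (k - 1) * (k + 1) = 0 := by linear_combination hk2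
      rcases mul_eq_zero.1 hfac with h' | h'
      · linarith
      · linarith
    rw [hk1, one_mul] at hc1'
    exact Real.injOn_cos hmem (hΦmem θ) hc1'
  -- continuity of Φ
  have hΦcont : Continuous Φ := by
    rw [continuous_iff_continuousAt]
    intro θ0
    apply tendsto_of_subseq_tendsto
    intro ns hns
    obtain ⟨ψ, hψmem, ms, hms, hlim⟩ :=
      tendsto_subseq_of_bounded (Metric.isBounded_Icc (0:ℝ) π) (fun n => hΦmem (ns n))
    have hlim' : Tendsto (fun n => Φ (ns (ms n))) atTop (𝓝 ψ) := hlim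
    have hψIcc : ψ ∈ Icc (0:ℝ) π := by rwa [closure_Icc] at hψmem
    have hns' : Tendsto (fun n => ns (ms n)) atTop (𝓝 θ0) := hns.comp hms.tendsto_atTop
    have hpair : Tendsto (fun n => ((ns (ms n)), Φ (ns (ms n)))) atTop (𝓝 (θ0, ψ)) :=
      hns'.prodMk_nhds hlim'
    have hFlim := (hcontF.tendsto (θ0, ψ)).comp hpair
    have hFlim2 : Tendsto (fun _ : ℕ => d) atTop
        (𝓝 (N (xf N d a b θ0 - zf N d a b θ0 ψ))) :=
      hFlim.congr (fun n => hΦd (ns (ms n)))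
    have hval : N (xf N d a b θ0 - zf N d a b θ0 ψ) = d :=
      tendsto_nhds_unique hFlim2 tendsto_const_nhds
    have hψeq : ψ = Φ θ0 := huniq θ0 ψ hψIcc hval
    exact ⟨ms, hψeq ▸ hlim'⟩
  -- pin down the endpoints
  have hY0 : zf N d a b 0 (Φ 0) = b := by
    have h1 := hΦd 0
    rw [hx0] at h1
    have h2' := hdetz_pos 0 _ (hΦIoo 0)
    rw [hx0] at h2'
    exact partner_unique hN' hsc hd ha (hNz 0 (Φ 0)) hb h1 hab h2' hdet
  have hYpi : zf N d a b π (Φ π) = -b := by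
    have h1 := hΦd π
    rw [hxpi] at h1
    have h2' := hdetz_pos π _ (hΦIoo π)
    rw [hxpi] at h2'
    have hnb : N (-b) = d := by rw [hNneg]; exact hb
    have hnab : N (-a - -b) = d := by
      rw [show -a - -b = -(a - b) from by ring, hNneg]; exact hab
    have hdetn : 0 < det2 (-a) (-b) := by
      rw [show det2 (-a) (-b) = det2 a b from by
        simp only [det2, Pi.neg_apply]; ring]
      exact hdet
    exact partner_unique hN' hsc hd (by rw [hNneg]; exact ha) (hNz π (Φ π)) hnb h1
      hnab h2' hdetn
  -- final IVT
  have hpairc : Continuous (fun θ : ℝ => (θ, Φ θ)) := continuous_id.prodMk hΦcont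
  have hconty : Continuous (fun θ => zf N d a b θ (Φ θ)) :=
    (hcontz.comp hpairc).congr (fun θ => rfl)
  have hcontg : Continuous (fun θ => N (xf N d a b θ + zf N d a b θ (Φ θ) - (a + b))) := by
    apply hcont.comp
    apply Continuous.sub _ continuous_const
    exact hcontx.add hconty
  have hg0 : N (xf N d a b 0 + zf N d a b 0 (Φ 0) - (a + b)) = 0 := by
    rw [hx0, hY0, show a + b - (a + b) = (0 : Fin 2 → ℝ) from by ring, hNzero]
  have hgπ : 2 * d ≤ N (xf N d a b π + zf N d a b π (Φ π) - (a + b)) := by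
    rw [hxpi, hYpi, show -a + -b - (a + b) = (-2 : ℝ) • (a + b) from by module, hn2]
    have h2 : |(-2:ℝ)| = 2 := by norm_num
    rw [h2]
    have hNab : d ≤ N (a + b) := by
      have e : (2:ℝ) • a = (a + b) + (a - b) := by module
      have t := hn3 (a + b) (a - b)
      rw [← e, hn2, ha, hab] at t
      have h2' : |(2:ℝ)| = 2 := by norm_num
      rw [h2'] at t; linarith
    linarith
  have hsub := intermediate_value_Icc (le_of_lt Real.pi_pos) hcontg.continuousOn
  have hmem : d ∈ Icc (N (xf N d a b 0 + zf N d a b 0 (Φ 0) - (a + b)))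
      (N (xf N d a b π + zf N d a b π (Φ π) - (a + b))) := by
    rw [hg0]; exact ⟨hd.le, by linarith⟩
  obtain ⟨θ, _, hgθ⟩ := hsub hmem
  exact ⟨xf N d a b θ, zf N d a b θ (Φ θ), hNx θ, hNz θ (Φ θ), hΦd θ, hgθ⟩

end RhombusAux

/-- Let `ℝ²` be equipped with a strictly convex norm `N` and `d > 0`.  For any `a, b`
with `N a = N b = N (a - b) = d`, there exist `ã, b̃` with
`N ã = N b̃ = N (ã - b̃) = N ((ã + b̃) - (a + b)) = d`. -/
theorem exists_translated_rhombus (N : (Fin 2 → ℝ) → ℝ) (hN : IsNorm N)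
    (hsc : ∀ u v : Fin 2 → ℝ, u ≠ 0 → v ≠ 0 → N (u + v) = N u + N v →
      ∃ γ : ℝ, 0 < γ ∧ u = γ • v)
    (d : ℝ) (hd : 0 < d) (a b : Fin 2 → ℝ)
    (ha : N a = d) (hb : N b = d) (hab : N (a - b) = d) :
    ∃ a' b' : Fin 2 → ℝ, N a' = d ∧ N b' = d ∧ N (a' - b') = d ∧
      N ((a' + b') - (a + b)) = d := by
  obtain ⟨hn0, hn1, hn2, hn3⟩ := hN
  have hN' : IsNorm N := ⟨hn0, hn1, hn2, hn3⟩
  have hNzero : N (0 : Fin 2 → ℝ) = 0 := (hn1 0).2 rfl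
  have ha0 : a ≠ 0 := by
    intro h; rw [h, hNzero] at ha; exact (ne_of_lt hd) ha
  have hindep : ∀ c s : ℝ, c • a + s • b = 0 → c = 0 ∧ s = 0 :=
    RhombusAux.indep_ab hN' hd ha hb hab
  have hdet_ne : RhombusAux.det2 a b ≠ 0 := by
    intro h0
    simp only [RhombusAux.det2] at h0
    have c10 : -(b 0) * a 0 + a 0 * b 0 = 0 := by ring
    have c11 : -(b 0) * a 1 + a 0 * b 1 = 0 := by linear_combination h0
    have c20 : -(b 1) * a 0 + a 1 * b 0 = 0 := by linear_combination -h0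
    have c21 : -(b 1) * a 1 + a 1 * b 1 = 0 := by ring
    have h1 := hindep (-(b 0)) (a 0) (by
      funext i; fin_cases i
      · simpa using c10
      · simpa using c11)
    have h2' := hindep (-(b 1)) (a 1) (by
      funext i; fin_cases i
      · simpa using c20
      · simpa using c21)
    apply ha0
    funext i; fin_cases i
    · simpa using h1.2
    · simpa using h2'.2
  rcases lt_or_gt_of_ne hdet_ne with hlt | hgt
  · -- swap a and b
    have hba : N (b - a) = d := by
      rw [show b - a = -(a - b) from by ring, RhombusAux.N_neg hN']; exact hab
    have hdet' : 0 < RhombusAux.det2 b a := by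
      have e : RhombusAux.det2 b a = -(RhombusAux.det2 a b) := by
        simp only [RhombusAux.det2]; ring
      rw [e]; linarith
    obtain ⟨a', b', h1, h2', h3, h4⟩ :=
      RhombusAux.main N hN' hsc d hd b a hb ha hba hdet'
    refine ⟨a', b', h1, h2', h3, ?_⟩
    rwa [add_comm b a] at h4
  · exact RhombusAux.main N hN' hsc d hd a b ha hb hab hgt
end

section
/- Let X and Y be real normed vector spaces with dim X ≥ dim Y = 2 and Y strictly convex, and let ρ > 0. Let d > 0 be such that every pair of points of X at distance d admits a finite set S (containing both) such that every injective ρ-distance-preserving map from S to Y preserves the distance between the pair. Then the same property holds for the distance 2d. -/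
/-- The finite-witness property for the distance `r`: every pair of points of `X` at
distance `r` admits a finite set containing both such that every injective map from that
set to `Y` preserving the distance `ρ` preserves the distance between the pair. -/
def WitnessProp (X Y : Type*) [NormedAddCommGroup X] [NormedSpace ℝ X]
    [NormedAddCommGroup Y] [NormedSpace ℝ Y] (ρ r : ℝ) : Prop :=
  ∀ x y : X, ‖x - y‖ = r → ∃ S : Finset X, x ∈ S ∧ y ∈ S ∧
    ∀ f : X → Y, Set.InjOn f ↑S →
      (∀ a ∈ S, ∀ b ∈ S, ‖a - b‖ = ρ → ‖f a - f b‖ = ρ) →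
      ‖f x - f y‖ = ‖x - y‖

section Auxiliary

open Module Submodule Set

variable {Y : Type*} [NormedAddCommGroup Y] [NormedSpace ℝ Y]

/-- Strict convexity: a convex combination of two vectors of norm at most `r`
has norm `r` only if the two vectors coincide. -/
lemma lemA (hsc : ∀ a b : Y, a ≠ 0 → b ≠ 0 → ‖a + b‖ = ‖a‖ + ‖b‖ → ∃ γ : ℝ, 0 < γ ∧ a = γ • b)
    {r t : ℝ} {e₁ e₂ : Y} (hr : 0 < r) (ht0 : 0 < t) (ht1 : t < 1)
    (h1 : ‖e₁‖ ≤ r) (h2 : ‖e₂‖ ≤ r) (h : ‖t • e₁ + (1 - t) • e₂‖ = r) : e₁ = e₂ := by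
  have ht1' : 0 < 1 - t := by linarith
  have h3 := norm_add_le (t • e₁) ((1 - t) • e₂)
  rw [h, norm_smul, norm_smul, Real.norm_eq_abs, Real.norm_eq_abs, abs_of_pos ht0,
    abs_of_pos ht1'] at h3
  have he1 : ‖e₁‖ = r := by nlinarith
  have he2 : ‖e₂‖ = r := by nlinarith
  have he1' : e₁ ≠ 0 := by intro hc; rw [hc, norm_zero] at he1; linarith
  have he2' : e₂ ≠ 0 := by intro hc; rw [hc, norm_zero] at he2; linarith
  obtain ⟨γ, hγ, heq⟩ := hsc (t • e₁) ((1 - t) • e₂)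
    (smul_ne_zero ht0.ne' he1') (smul_ne_zero ht1'.ne' he2')
    (by rw [h, norm_smul, norm_smul, Real.norm_eq_abs, Real.norm_eq_abs, abs_of_pos ht0,
      abs_of_pos ht1', he1, he2]; ring)
  rw [smul_smul] at heq
  have hn := congrArg norm heq
  rw [norm_smul, norm_smul, Real.norm_eq_abs, Real.norm_eq_abs, abs_of_pos ht0,
    abs_of_pos (by positivity : (0:ℝ) < γ * (1 - t)), he1, he2] at hn
  have hco : t = γ * (1 - t) := mul_right_cancel₀ hr.ne' hn
  rw [← hco] at heq
  exact smul_right_injective Y ht0.ne' heq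

/-- Key configuration lemma: impossible position strictly inside the chord. -/
lemma lemC (hsc : ∀ a b : Y, a ≠ 0 → b ≠ 0 → ‖a + b‖ = ‖a‖ + ‖b‖ → ∃ γ : ℝ, 0 < γ ∧ a = γ • b)
    {r α β : ℝ} {u v P : Y} (hr : 0 < r) (hP : ‖P‖ = r) (hu : ‖u‖ = r)
    (huP : ‖u - P‖ = r) (hv : ‖v‖ = r) (hveq : v = α • u + β • P)
    (hα0 : 0 < α) (hα1 : α ≤ 1) (hβl : -1 < β) (hβu : β < 1 - α) : False := by
  set t : ℝ := (1 - α - β) / (2 - α) with hts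
  have h2α : (0:ℝ) < 2 - α := by linarith
  have ht0 : 0 < t := div_pos (by linarith) h2α
  have ht1 : t < 1 := (div_lt_one h2α).2 (by linarith)
  have hte : t * (2 - α) = 1 - α - β := div_mul_cancel₀ _ h2α.ne'
  have h1 : ‖α • u - P‖ ≤ r := by
    have hid : α • u - P = α • (u - P) + (α - 1) • P := by module
    rw [hid]
    calc ‖α • (u - P) + (α - 1) • P‖ ≤ ‖α • (u - P)‖ + ‖(α - 1) • P‖ := norm_add_le _ _
      _ = α * r + (1 - α) * r := by
          rw [norm_smul, norm_smul, Real.norm_eq_abs, Real.norm_eq_abs, abs_of_pos hα0,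
            abs_of_nonpos (by linarith : α - 1 ≤ 0), huP, hP]; ring
      _ = r := by ring
  have h2 : ‖α • u + (1 - α) • P‖ ≤ r := by
    calc ‖α • u + (1 - α) • P‖ ≤ ‖α • u‖ + ‖(1 - α) • P‖ := norm_add_le _ _
      _ = α * r + (1 - α) * r := by
          rw [norm_smul, norm_smul, Real.norm_eq_abs, Real.norm_eq_abs, abs_of_pos hα0,
            abs_of_nonneg (by linarith : (0:ℝ) ≤ 1 - α), hu, hP]
      _ = r := by ring
  have hcombo : t • (α • u - P) + (1 - t) • (α • u + (1 - α) • P) = v := by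
    rw [hveq]
    match_scalars
    · ring
    · linear_combination -hte
  have he := lemA hsc hr ht0 ht1 h1 h2 (by rw [hcombo, hv])
  have hP0 : ((2:ℝ) - α) • P = 0 := by
    have : α • u - P - (α • u + (1 - α) • P) = -((2 - α) • P) := by module
    rw [he, sub_self] at this
    exact (neg_eq_zero.1 this.symm)
  have : P = 0 := by
    rcases smul_eq_zero.1 hP0 with hc | hc
    · exact absurd hc (by positivity)
    · exact hc
  rw [this, norm_zero] at hP; linarith

lemma lemB' (hsc : ∀ a b : Y, a ≠ 0 → b ≠ 0 → ‖a + b‖ = ‖a‖ + ‖b‖ → ∃ γ : ℝ, 0 < γ ∧ a = γ • b)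
    {r : ℝ} (hr : 0 < r) {P u v : Y} (φ : Y →ₗ[ℝ] ℝ)
    (hker : ∀ w : Y, φ w = 0 → ∃ c : ℝ, w = c • P)
    (hP : ‖P‖ = r) (hu : ‖u‖ = r) (huP : ‖u - P‖ = r) (hv : ‖v‖ = r) (hvP : ‖v - P‖ = r)
    (hφu : 0 < φ u) (hφv : 0 < φ v) (hle : φ v ≤ φ u) : u = v := by
  set α : ℝ := φ v / φ u with hαs
  have hα0 : 0 < α := div_pos hφv hφu
  have hα1 : α ≤ 1 := (div_le_one hφu).2 hle
  obtain ⟨β, hβ⟩ := hker (v - α • u) (by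
    rw [map_sub, map_smul, smul_eq_mul, hαs, div_mul_cancel₀ _ hφu.ne', sub_self])
  have hveq : v = α • u + β • P := by rw [← hβ]; abel
  have hP0 : P ≠ 0 := fun hc => by rw [hc, norm_zero] at hP; linarith
  have hβ1 : β ≤ 1 := by
    have h1 : (α + β) • P = v - α • (u - P) := by rw [hveq]; module
    have h2 : ‖(α + β) • P‖ ≤ ‖v‖ + ‖α • (u - P)‖ := by rw [h1]; exact norm_sub_le _ _
    rw [hv, norm_smul, norm_smul, Real.norm_eq_abs, Real.norm_eq_abs, abs_of_pos hα0, huP,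
      hP] at h2
    have := le_abs_self (α + β)
    nlinarith
  have hβ2 : -α ≤ β := by
    have h1 : (1 - β) • P = (P - v) + α • u := by rw [hveq]; module
    have h2 : ‖(1 - β) • P‖ ≤ ‖P - v‖ + ‖α • u‖ := by rw [h1]; exact norm_add_le _ _
    rw [norm_sub_rev, hvP, norm_smul, norm_smul, Real.norm_eq_abs, Real.norm_eq_abs,
      abs_of_pos hα0, hu, hP] at h2
    have := le_abs_self (1 - β)
    nlinarith
  rcases lt_trichotomy β (1 - α) with hb | hb | hb
  · by_cases hb1 : -1 < β
    · exact (lemC hsc hr hP hu huP hv hveq hα0 hα1 hb1 hb).elim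
    · push_neg at hb1
      have hα' : α = 1 := le_antisymm hα1 (by linarith)
      have hβ' : β = -1 := le_antisymm hb1 (by linarith)
      have hv2 : u - (2:ℝ) • P = v - P := by rw [hveq, hα', hβ']; module
      have hcombo : (1/2 : ℝ) • u + (1 - 1/2 : ℝ) • (u - (2:ℝ) • P) = v := by
        rw [hveq, hα', hβ']; match_scalars <;> ring
      have hn2 : ‖u - (2:ℝ) • P‖ = r := by rw [hv2]; exact hvP
      have he := lemA hsc hr (by norm_num : (0:ℝ) < 1/2) (by norm_num) hu.le
        hn2.le (by rw [hcombo, hv])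
      exfalso
      apply hP0
      have h2 : (2:ℝ) • P = 0 := by
        have := sub_eq_zero.2 he
        have h3 : u - (u - (2:ℝ) • P) = (2:ℝ) • P := by module
        rw [this] at h3; exact h3.symm
      rcases smul_eq_zero.1 h2 with hc | hc
      · norm_num at hc
      · exact hc
  · rcases eq_or_lt_of_le hα1 with hα' | hα'
    · rw [hveq, hα']
      have : β = 0 := by rw [hb, hα']; ring
      rw [this]; simp
    · have hcombo : α • u + (1 - α) • P = v := by rw [hveq, hb]
      have he := lemA hsc hr hα0 hα' hu.le hP.le (by rw [hcombo, hv])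
      rw [he, sub_self, norm_zero] at huP
      linarith
  · by_cases hcase : β < 2 - α
    · have hveq2 : P - v = α • (P - u) + (1 - α - β) • P := by rw [hveq]; module
      have hu2 : ‖P - u‖ = r := by rw [norm_sub_rev]; exact huP
      have hu2P : ‖(P - u) - P‖ = r := by simpa using hu
      have hv2 : ‖P - v‖ = r := by rw [norm_sub_rev]; exact hvP
      exact (lemC hsc hr hP hu2 hu2P hv2 hveq2 hα0 hα1 (by linarith) (by linarith)).elim
    · push_neg at hcase
      have hα' : α = 1 := by linarith
      have hβ' : β = 1 := by linarith
      have hcombo : (1/2 : ℝ) • (u - P) + (1 - 1/2 : ℝ) • v = u := by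
        rw [hveq, hα', hβ']; match_scalars <;> ring
      have he := lemA hsc hr (by norm_num : (0:ℝ) < 1/2) (by norm_num) huP.le hv.le
        (by rw [hcombo, hu])
      exfalso
      apply hP0
      rw [hveq, hα', hβ'] at he
      have h2 : (2:ℝ) • P = 0 := by
        have h3 : (1:ℝ) • u + (1:ℝ) • P - (u - P) = (2:ℝ) • P := by module
        rw [← he, sub_self] at h3; exact h3.symm
      rcases smul_eq_zero.1 h2 with hc | hc
      · norm_num at hc
      · exact hc

lemma lemB (hsc : ∀ a b : Y, a ≠ 0 → b ≠ 0 → ‖a + b‖ = ‖a‖ + ‖b‖ → ∃ γ : ℝ, 0 < γ ∧ a = γ • b)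
    {r : ℝ} (hr : 0 < r) {P u v : Y} (φ : Y →ₗ[ℝ] ℝ)
    (hker : ∀ w : Y, φ w = 0 → ∃ c : ℝ, w = c • P)
    (hP : ‖P‖ = r) (hu : ‖u‖ = r) (huP : ‖u - P‖ = r) (hv : ‖v‖ = r) (hvP : ‖v - P‖ = r)
    (hφu : 0 < φ u) (hφv : 0 < φ v) : u = v := by
  rcases le_total (φ v) (φ u) with hle | hle
  · exact lemB' hsc hr φ hker hP hu huP hv hvP hφu hφv hle
  · exact (lemB' hsc hr φ hker hP hv hvP hu huP hφv hφu hle).symm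

lemma lemD (hsc : ∀ a b : Y, a ≠ 0 → b ≠ 0 → ‖a + b‖ = ‖a‖ + ‖b‖ → ∃ γ : ℝ, 0 < γ ∧ a = γ • b)
    (hY : Module.finrank ℝ Y = 2) {r : ℝ} (hr : 0 < r) {A P Q : Y}
    (hP : ‖P‖ = r) (hA : ‖A‖ = r) (hAP : ‖A - P‖ = r) (hQ : ‖Q‖ = r) (hQP : ‖Q - P‖ = r) :
    Q = A ∨ Q = P - A := by
  have hP0 : P ≠ 0 := fun hc => by rw [hc, norm_zero] at hP; linarith
  have hspan : (ℝ ∙ P) ≠ ⊤ := by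
    intro hc
    have h1 : Module.finrank ℝ (ℝ ∙ P) = 1 := finrank_span_singleton hP0
    rw [hc, finrank_top, hY] at h1
    omega
  obtain ⟨w, hw⟩ : ∃ w, w ∉ (ℝ ∙ P) := by
    by_contra hc; push_neg at hc; exact hspan (Submodule.eq_top_iff'.2 hc)
  have hli : LinearIndependent ℝ ![w, P] := by
    rw [linearIndependent_fin2]
    refine ⟨by simpa using hP0, fun a ha => ?_⟩
    simp only [Matrix.cons_val_one, Matrix.head_cons, Matrix.cons_val_zero] at ha
    exact hw (Submodule.mem_span_singleton.2 ⟨a, ha⟩)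
  let b : Basis (Fin 2) ℝ Y := basisOfLinearIndependentOfCardEqFinrank hli (by simp [hY])
  have hb0 : b 0 = w := by simp [b]
  have hb1 : b 1 = P := by simp [b]
  set φ : Y →ₗ[ℝ] ℝ := b.coord 0 with hφs
  have hφP : φ P = 0 := by
    rw [← hb1, hφs, Basis.coord_apply, Basis.repr_self]
    simp
  have hker : ∀ x : Y, φ x = 0 → ∃ c : ℝ, x = c • P := by
    intro x hx
    refine ⟨b.repr x 1, ?_⟩
    have hs := b.sum_repr x
    rw [Fin.sum_univ_two] at hs
    rw [hφs, Basis.coord_apply] at hx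
    conv_lhs => rw [← hs]
    rw [hx, zero_smul, zero_add, hb1]
  have habs : ∀ B : Y, ‖B‖ = r → ‖B - P‖ = r → φ B ≠ 0 := by
    intro B hB hBP hc
    obtain ⟨c, hcc⟩ := hker B hc
    have hn := congrArg norm hcc
    rw [hB, norm_smul, Real.norm_eq_abs, hP] at hn
    have hc1 : |c| = 1 := by
      have := mul_right_cancel₀ hr.ne' (by linarith : |c| * r = 1 * r)
      linarith
    rcases abs_eq (by norm_num : (0:ℝ) ≤ 1) |>.1 hc1 with hc' | hc'
    · rw [hc', one_smul] at hcc
      rw [hcc, sub_self, norm_zero] at hBP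
      linarith
    · rw [hc'] at hcc
      have hBP2 : B - P = -((2:ℝ) • P) := by rw [hcc]; module
      rw [hBP2, norm_neg, norm_smul, Real.norm_eq_abs, hP] at hBP
      rw [abs_of_pos (by norm_num : (0:ℝ) < 2)] at hBP
      linarith
  have hφA : φ A ≠ 0 := habs A hA hAP
  have hφQ : φ Q ≠ 0 := habs Q hQ hQP
  have hPA1 : ‖P - A‖ = r := by rw [norm_sub_rev]; exact hAP
  have hPA2 : ‖(P - A) - P‖ = r := by simpa using hA
  have hφPA : φ (P - A) = -φ A := by rw [map_sub, hφP, zero_sub]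
  rcases hφA.lt_or_gt with hA' | hA' <;> rcases hφQ.lt_or_gt with hQ' | hQ'
  · left
    exact lemB hsc hr (-φ) (fun x hx => hker x (by simpa using hx)) hP hQ hQP hA hAP
      (by simpa using hQ') (by simpa using hA')
  · right
    exact lemB hsc hr φ hker hP hQ hQP hPA1 hPA2 hQ' (by rw [hφPA]; linarith)
  · right
    exact lemB hsc hr (-φ) (fun x hx => hker x (by simpa using hx)) hP hQ hQP hPA1 hPA2
      (by simpa using hQ') (by simp only [LinearMap.neg_apply, hφPA]; linarith)
  · left
    exact lemB hsc hr φ hker hP hQ hQP hA hAP hQ' hA'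

theorem witness_double' {X Y : Type*} [NormedAddCommGroup X] [NormedSpace ℝ X]
    [NormedAddCommGroup Y] [NormedSpace ℝ Y]
    (hX : 2 ≤ Module.rank ℝ X) (hY : Module.finrank ℝ Y = 2)
    (hsc : ∀ a b : Y, a ≠ 0 → b ≠ 0 → ‖a + b‖ = ‖a‖ + ‖b‖ → ∃ γ : ℝ, 0 < γ ∧ a = γ • b)
    (ρ : ℝ) (hρ : 0 < ρ) (d : ℝ) (hd : 0 < d)
    (h : ∀ x y : X, ‖x - y‖ = d → ∃ S : Finset X, x ∈ S ∧ y ∈ S ∧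
      ∀ f : X → Y, Set.InjOn f ↑S →
        (∀ a ∈ S, ∀ b ∈ S, ‖a - b‖ = ρ → ‖f a - f b‖ = ρ) →
        ‖f x - f y‖ = ‖x - y‖) :
    ∀ x y : X, ‖x - y‖ = 2 * d → ∃ S : Finset X, x ∈ S ∧ y ∈ S ∧
      ∀ f : X → Y, Set.InjOn f ↑S →
        (∀ a ∈ S, ∀ b ∈ S, ‖a - b‖ = ρ → ‖f a - f b‖ = ρ) →
        ‖f x - f y‖ = ‖x - y‖ := by
  classical
  intro x y hxy
  set e : X := (2:ℝ)⁻¹ • (y - x) with he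
  have hyx : ‖y - x‖ = 2 * d := by rw [norm_sub_rev]; exact hxy
  have hne : ‖e‖ = d := by
    rw [he, norm_smul, Real.norm_eq_abs, hyx]
    rw [abs_of_pos (by norm_num : (0:ℝ) < 2⁻¹)]
    ring
  have hy2e : y = x + (2:ℝ) • e := by
    rw [he, smul_smul]
    norm_num
  -- find the auxiliary point p with ‖p‖ = d and ‖p - e‖ = d
  have hrank : (1 : Cardinal) < Module.rank ℝ X := lt_of_lt_of_le (by norm_num) hX
  have hsph := (isPathConnected_sphere hrank (0:X) hd.le).isConnected.isPreconnected
  have hcont : ContinuousOn (fun q : X => ‖q - e‖) (Metric.sphere (0:X) d) :=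
    (continuous_norm.comp (continuous_id.sub continuous_const)).continuousOn
  have hmem1 : e ∈ Metric.sphere (0:X) d := by
    rw [mem_sphere_zero_iff_norm]; exact hne
  have hmem2 : -e ∈ Metric.sphere (0:X) d := by
    rw [mem_sphere_zero_iff_norm, norm_neg]; exact hne
  have hIcc : d ∈ Set.Icc ‖e - e‖ ‖-e - e‖ := by
    constructor
    · rw [sub_self, norm_zero]; exact hd.le
    · have : -e - e = -((2:ℝ) • e) := by module
      rw [this, norm_neg, norm_smul, Real.norm_eq_abs, hne,
        abs_of_pos (by norm_num : (0:ℝ) < 2)]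
      linarith
  obtain ⟨p, hpmem, hp0⟩ := hsph.intermediate_value hmem1 hmem2 hcont hIcc
  have hpn : ‖p‖ = d := mem_sphere_zero_iff_norm.1 hpmem
  have hp : ‖p - e‖ = d := hp0
  set z : X := x + e with hz
  set y₁ : X := x + p with hy₁
  set x₁ : X := x + p + e with hx₁
  -- the seven distances in X
  have n1 : ‖x - z‖ = d := by
    have : x - z = -e := by rw [hz]; module
    rw [this, norm_neg]; exact hne
  have n2 : ‖z - y‖ = d := by
    have : z - y = -e := by rw [hz, hy2e]; module
    rw [this, norm_neg]; exact hne
  have n3 : ‖x - y₁‖ = d := by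
    have : x - y₁ = -p := by rw [hy₁]; module
    rw [this, norm_neg]; exact hpn
  have n4 : ‖y₁ - z‖ = d := by
    have : y₁ - z = p - e := by rw [hy₁, hz]; module
    rw [this]; exact hp
  have n5 : ‖y₁ - x₁‖ = d := by
    have : y₁ - x₁ = -e := by rw [hy₁, hx₁]; module
    rw [this, norm_neg]; exact hne
  have n6 : ‖x₁ - z‖ = d := by
    have : x₁ - z = p := by rw [hx₁, hz]; module
    rw [this]; exact hpn
  have n7 : ‖x₁ - y‖ = d := by
    have : x₁ - y = p - e := by rw [hx₁, hy2e]; module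
    rw [this]; exact hp
  -- distinctness in X
  have hx₁x : x₁ ≠ x := by
    intro hc
    have h2 : p + e = 0 := by
      have h3 : x₁ - x = p + e := by rw [hx₁]; module
      rw [hc, sub_self] at h3; exact h3.symm
    have hpe : p = -e := eq_neg_of_add_eq_zero_left h2
    rw [hpe] at hp
    have h4 : -e - e = -((2:ℝ) • e) := by module
    rw [h4, norm_neg, norm_smul, Real.norm_eq_abs, hne,
      abs_of_pos (by norm_num : (0:ℝ) < 2)] at hp
    linarith
  have hy₁y : y₁ ≠ y := by
    intro hc
    have h2 : p - (2:ℝ) • e = 0 := by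
      have h3 : y₁ - y = p - (2:ℝ) • e := by rw [hy₁, hy2e]; module
      rw [hc, sub_self] at h3; exact h3.symm
    have hpe : p = (2:ℝ) • e := sub_eq_zero.1 h2
    rw [hpe, norm_smul, Real.norm_eq_abs, hne,
      abs_of_pos (by norm_num : (0:ℝ) < 2)] at hpn
    linarith
  -- witness sets
  obtain ⟨S₁, hm₁a, hm₁b, H₁⟩ := h x z n1
  obtain ⟨S₂, hm₂a, hm₂b, H₂⟩ := h z y n2
  obtain ⟨S₃, hm₃a, hm₃b, H₃⟩ := h x y₁ n3
  obtain ⟨S₄, hm₄a, hm₄b, H₄⟩ := h y₁ z n4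
  obtain ⟨S₅, hm₅a, hm₅b, H₅⟩ := h y₁ x₁ n5
  obtain ⟨S₆, hm₆a, hm₆b, H₆⟩ := h x₁ z n6
  obtain ⟨S₇, hm₇a, hm₇b, H₇⟩ := h x₁ y n7
  refine ⟨S₁ ∪ S₂ ∪ S₃ ∪ S₄ ∪ S₅ ∪ S₆ ∪ S₇, by simp [hm₁a], by simp [hm₂b], ?_⟩
  intro f hinj hρ
  set S : Finset X := S₁ ∪ S₂ ∪ S₃ ∪ S₄ ∪ S₅ ∪ S₆ ∪ S₇ with hS
  have hsub : ∀ T : Finset X, T ⊆ S →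
      Set.InjOn f ↑T ∧ (∀ a ∈ T, ∀ b ∈ T, ‖a - b‖ = ρ → ‖f a - f b‖ = ρ) := by
    intro T hT
    exact ⟨hinj.mono (Finset.coe_subset.2 hT),
      fun a ha b hb hab => hρ a (hT ha) b (hT hb) hab⟩
  have hs₁ : S₁ ⊆ S := by intro a ha; simp [hS, ha]
  have hs₂ : S₂ ⊆ S := by intro a ha; simp [hS, ha]
  have hs₃ : S₃ ⊆ S := by intro a ha; simp [hS, ha]
  have hs₄ : S₄ ⊆ S := by intro a ha; simp [hS, ha]
  have hs₅ : S₅ ⊆ S := by intro a ha; simp [hS, ha]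
  have hs₆ : S₆ ⊆ S := by intro a ha; simp [hS, ha]
  have hs₇ : S₇ ⊆ S := by intro a ha; simp [hS, ha]
  obtain ⟨i₁, p₁⟩ := hsub S₁ hs₁
  obtain ⟨i₂, p₂⟩ := hsub S₂ hs₂
  obtain ⟨i₃, p₃⟩ := hsub S₃ hs₃
  obtain ⟨i₄, p₄⟩ := hsub S₄ hs₄
  obtain ⟨i₅, p₅⟩ := hsub S₅ hs₅
  obtain ⟨i₆, p₆⟩ := hsub S₆ hs₆
  obtain ⟨i₇, p₇⟩ := hsub S₇ hs₇
  have d₁ : ‖f x - f z‖ = d := by rw [H₁ f i₁ p₁]; exact n1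
  have d₂ : ‖f z - f y‖ = d := by rw [H₂ f i₂ p₂]; exact n2
  have d₃ : ‖f x - f y₁‖ = d := by rw [H₃ f i₃ p₃]; exact n3
  have d₄ : ‖f y₁ - f z‖ = d := by rw [H₄ f i₄ p₄]; exact n4
  have d₅ : ‖f y₁ - f x₁‖ = d := by rw [H₅ f i₅ p₅]; exact n5
  have d₆ : ‖f x₁ - f z‖ = d := by rw [H₆ f i₆ p₆]; exact n6
  have d₇ : ‖f x₁ - f y‖ = d := by rw [H₇ f i₇ p₇]; exact n7
  -- memberships in S
  have mx : x ∈ (↑S : Set X) := by simp [hS]; exact Or.inl hm₁a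
  have my : y ∈ (↑S : Set X) := by simp [hS]; exact Or.inr (Or.inl hm₂b)
  have my₁ : y₁ ∈ (↑S : Set X) := by simp [hS]; exact Or.inr (Or.inr (Or.inl hm₃b))
  have mx₁ : x₁ ∈ (↑S : Set X) := by
    simp [hS]; exact Or.inr (Or.inr (Or.inr (Or.inr (Or.inr (Or.inl hm₆a)))))
  -- distinct images
  have hfx₁x : f x₁ ≠ f x := fun hc => hx₁x (hinj mx₁ mx hc)
  have hfy₁y : f y ≠ f y₁ := fun hc => hy₁y (hinj my my₁ hc).symm
  -- the strictly convex plane argument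
  set A : Y := f x - f z with hA
  set P : Y := f y₁ - f z with hPd
  set Q : Y := f x₁ - f z with hQd
  set C : Y := f y - f z with hC
  have nA : ‖A‖ = d := d₁
  have nP : ‖P‖ = d := d₄
  have nAP : ‖A - P‖ = d := by
    have : A - P = f x - f y₁ := by rw [hA, hPd]; module
    rw [this]; exact d₃
  have nQ : ‖Q‖ = d := d₆
  have nQP : ‖Q - P‖ = d := by
    have : Q - P = -(f y₁ - f x₁) := by rw [hQd, hPd]; module
    rw [this, norm_neg]; exact d₅
  have nC : ‖C‖ = d := by
    have : C = -(f z - f y) := by rw [hC]; module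
    rw [this, norm_neg]; exact d₂
  have nCQ : ‖C - Q‖ = d := by
    have : C - Q = -(f x₁ - f y) := by rw [hC, hQd]; module
    rw [this, norm_neg]; exact d₇
  have step1 : Q = P - A := by
    rcases lemD hsc hY hd nP nA nAP nQ nQP with hc | hc
    · exfalso
      apply hfx₁x
      have := sub_eq_zero.2 hc
      rw [hQd, hA] at this
      have h2 : f x₁ - f z - (f x - f z) = f x₁ - f x := by module
      rw [h2] at this
      exact sub_eq_zero.1 this
    · exact hc
  have step2 : C = -A := by
    have nPQ : ‖P - Q‖ = d := by rw [norm_sub_rev]; exact nQP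
    rcases lemD hsc hY hd nQ nP nPQ nC nCQ with hc | hc
    · exfalso
      apply hfy₁y
      have := sub_eq_zero.2 hc
      rw [hC, hPd] at this
      have h2 : f y - f z - (f y₁ - f z) = f y - f y₁ := by module
      rw [h2] at this
      exact sub_eq_zero.1 this
    · rw [hc, step1]
      module
  have hfinal : f x - f y = (2:ℝ) • A := by
    have h2 : f x - f y = A - C := by rw [hA, hC]; module
    rw [h2, step2]
    module
  rw [hfinal, norm_smul, Real.norm_eq_abs, abs_of_pos (by norm_num : (0:ℝ) < 2), nA, hxy]

end Auxiliary

/-- If the finite-witness property holds for the distance `d`, then it holds for `2·d`. -/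
theorem witness_double {X Y : Type*} [NormedAddCommGroup X] [NormedSpace ℝ X]
    [NormedAddCommGroup Y] [NormedSpace ℝ Y]
    (hX : 2 ≤ Module.rank ℝ X) (hY : Module.finrank ℝ Y = 2)
    (hsc : ∀ a b : Y, a ≠ 0 → b ≠ 0 → ‖a + b‖ = ‖a‖ + ‖b‖ → ∃ γ : ℝ, 0 < γ ∧ a = γ • b)
    (ρ : ℝ) (hρ : 0 < ρ) (d : ℝ) (hd : 0 < d)
    (h : WitnessProp X Y ρ d) : WitnessProp X Y ρ (2 * d) :=
  witness_double' hX hY hsc ρ hρ d hd h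
end

section
/- Let X and Y be real normed spaces with dim X ≥ dim Y = 2 and Y strictly convex, and let ρ > 0. If the finite-witness property holds for distances d and 2d (i.e., for pairs at these distances there exist finite sets on which injective ρ-distance-preserving maps to Y preserve the distance), then it holds for every distance k·d, k a positive integer. -/
/-!
Put `w i = x + (i / k) • (y - x)`. The witness sets of the pairs `(w i, w (i + 1))`, at
distance `d`, and `(w i, w (i + 2))`, at distance `2 * d`, combine into one finite set `S`.
An injective map `f` preserving `ρ` on `S` therefore keeps `‖f (w i) - f (w (i + 1))‖ = d`
and `‖f (w i) - f (w (i + 2))‖ = 2 * d`; in the strictly convex space `Y` this forces all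
steps `f (w i) - f (w (i + 1))` to be equal, so `‖f x - f y‖ = k * d`.
-/

open Finset

theorem StrictConvexSpace.of_norm_add_eq_exists_pos_smul {E : Type*} [NormedAddCommGroup E]
    [NormedSpace ℝ E]
    (h : ∀ a b : E, a ≠ 0 → b ≠ 0 → ‖a + b‖ = ‖a‖ + ‖b‖ → ∃ γ : ℝ, 0 < γ ∧ a = γ • b) :
    StrictConvexSpace ℝ E := by
  refine StrictConvexSpace.of_norm_add fun a b ha hb hab => ?_
  obtain ⟨γ, hγ, rfl⟩ := h a b (norm_ne_zero_iff.1 (by simp [ha]))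
    (norm_ne_zero_iff.1 (by simp [hb])) (by rw [hab, ha, hb]; norm_num)
  exact SameRay.sameRay_pos_smul_left b hγ

theorem norm_sub_eq_mul_of_norm_sub_succ {E : Type*} [NormedAddCommGroup E] [NormedSpace ℝ E]
    [StrictConvexSpace ℝ E] {u : ℕ → E} {k : ℕ} {d : ℝ}
    (h₁ : ∀ i < k, ‖u i - u (i + 1)‖ = d) (h₂ : ∀ i, i + 2 ≤ k → ‖u i - u (i + 2)‖ = 2 * d) :
    ‖u 0 - u k‖ = k * d := by
  have hstep : ∀ i < k, u i - u (i + 1) = u 0 - u 1 := by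
    intro i
    induction i with
    | zero => intro _; rfl
    | succ i ih =>
      intro hi
      rw [← ih (by omega)]
      refine (eq_of_norm_eq_of_norm_add_eq ?_ ?_).symm
      · rw [h₁ i (by omega), h₁ (i + 1) hi]
      · rw [sub_add_sub_cancel, h₂ i hi, h₁ i (by omega), h₁ (i + 1) hi, two_mul]
  calc ‖u 0 - u k‖ = ‖∑ _i ∈ range k, (u 0 - u 1)‖ := by
        rw [← sum_range_sub' u k, sum_congr rfl fun i hi => hstep i (mem_range.1 hi)]
    _ = ∑ _i ∈ range k, ‖u 0 - u 1‖ := by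
        rw [sum_const, sum_const, card_range, ← Nat.cast_smul_eq_nsmul ℝ, norm_smul,
          nsmul_eq_mul, Real.norm_natCast]
    _ = ∑ _i ∈ range k, d := sum_congr rfl fun i hi => by
        rw [← hstep i (mem_range.1 hi), h₁ i (mem_range.1 hi)]
    _ = k * d := by simp

theorem norm_lineMap_sub_lineMap_nat_div {E : Type*} [NormedAddCommGroup E] [NormedSpace ℝ E]
    (x y : E) {k : ℕ} (hk : k ≠ 0) (i j : ℕ) :
    ‖AffineMap.lineMap x y ((i : ℝ) / k) - AffineMap.lineMap x y (((i + j : ℕ) : ℝ) / k)‖ =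
      j * ‖x - y‖ / k := by
  have hk' : (k : ℝ) ≠ 0 := Nat.cast_ne_zero.2 hk
  rw [← dist_eq_norm, dist_lineMap_lineMap, dist_eq_norm x y, Real.dist_eq, Nat.cast_add,
    show (i : ℝ) / k - (i + j) / k = -(j / k) by ring, abs_neg, abs_of_nonneg (by positivity)]
  ring

theorem exists_common_witness_of_witnessProp {X Y : Type*} [NormedAddCommGroup X]
    [NormedSpace ℝ X] [NormedAddCommGroup Y] [NormedSpace ℝ Y] {ρ : ℝ} {P : Finset (X × X)}
    (hP : ∀ p ∈ P, WitnessProp X Y ρ ‖p.1 - p.2‖) :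
    ∃ S : Finset X, (∀ p ∈ P, p.1 ∈ S ∧ p.2 ∈ S) ∧
      ∀ f : X → Y, Set.InjOn f ↑S → (∀ a ∈ S, ∀ b ∈ S, ‖a - b‖ = ρ → ‖f a - f b‖ = ρ) →
        ∀ p ∈ P, ‖f p.1 - f p.2‖ = ‖p.1 - p.2‖ := by
  classical
  induction P using Finset.induction_on with
  | empty => exact ⟨∅, by simp, by simp⟩
  | insert p P _ ih =>
    obtain ⟨S, hPS, hS⟩ := ih fun q hq => hP q (mem_insert_of_mem hq)
    obtain ⟨T, hpT₁, hpT₂, hT⟩ := hP p (mem_insert_self p P) p.1 p.2 rfl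
    refine ⟨T ∪ S, ?_, fun f hf hρ => ?_⟩
    · simp only [mem_insert, forall_eq_or_imp, mem_union]
      exact ⟨⟨.inl hpT₁, .inl hpT₂⟩, fun q hq => ⟨.inr (hPS q hq).1, .inr (hPS q hq).2⟩⟩
    · simp only [mem_insert, forall_eq_or_imp]
      exact ⟨hT f (hf.mono (by simp)) fun a ha b hb => hρ a (by simp [ha]) b (by simp [hb]),
        hS f (hf.mono (by simp)) fun a ha b hb => hρ a (by simp [ha]) b (by simp [hb])⟩

theorem witness_multiples_general {X Y : Type*} [NormedAddCommGroup X] [NormedSpace ℝ X]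
    [NormedAddCommGroup Y] [NormedSpace ℝ Y]
    (hsc : ∀ a b : Y, a ≠ 0 → b ≠ 0 → ‖a + b‖ = ‖a‖ + ‖b‖ → ∃ γ : ℝ, 0 < γ ∧ a = γ • b)
    (ρ : ℝ) (d : ℝ)
    (h1 : WitnessProp X Y ρ d) (h2 : WitnessProp X Y ρ (2 * d)) :
    ∀ k : ℕ, 0 < k → WitnessProp X Y ρ (k * d) := by
  classical
  have := StrictConvexSpace.of_norm_add_eq_exists_pos_smul hsc
  intro k hk x y hxy
  set w : ℕ → X := fun i => AffineMap.lineMap x y ((i : ℝ) / k)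
  have hw : ∀ i j, ‖w i - w (i + j)‖ = j * d := fun i j => by
    rw [norm_lineMap_sub_lineMap_nat_div x y hk.ne' i j, hxy]
    field_simp
  have hw0 : w 0 = x := by simp [w]
  have hwk : w k = y := by simp [w, hk.ne']
  set P := (range k).image (fun i => (w i, w (i + 1))) ∪
    (range (k - 1)).image (fun i => (w i, w (i + 2)))
  have hmem₁ : ∀ i < k, (w i, w (i + 1)) ∈ P := fun i hi =>
    mem_union_left _ (mem_image_of_mem _ (mem_range.2 hi))
  have hmem₂ : ∀ i, i + 2 ≤ k → (w i, w (i + 2)) ∈ P := fun i hi =>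
    mem_union_right _ (mem_image_of_mem _ (mem_range.2 (by omega)))
  obtain ⟨S, hPS, hS⟩ := exists_common_witness_of_witnessProp (Y := Y) (ρ := ρ) (P := P) (by
    simp only [P, mem_union, mem_image, mem_range]
    rintro _ (⟨i, -, rfl⟩ | ⟨i, -, rfl⟩)
    · simpa [hw] using h1
    · simpa [hw] using h2)
  refine ⟨S, hw0 ▸ (hPS _ (hmem₁ 0 hk)).1, ?_, fun f hf hρ => ?_⟩
  · simpa [Nat.sub_add_cancel hk, hwk] using (hPS _ (hmem₁ (k - 1) (by omega))).2
  calc ‖f x - f y‖ = ‖(f ∘ w) 0 - (f ∘ w) k‖ := by simp only [Function.comp_apply, hw0, hwk]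
    _ = k * d := norm_sub_eq_mul_of_norm_sub_succ
        (fun i hi => by simpa [hw] using hS f hf hρ _ (hmem₁ i hi))
        (fun i hi => by simpa [hw] using hS f hf hρ _ (hmem₂ i hi))
    _ = ‖x - y‖ := hxy.symm

/-- If the finite-witness property holds for the distances `d` and `2·d`, then it holds
for every distance `k·d`, `k` a positive integer. -/
theorem witness_multiples {X Y : Type*} [NormedAddCommGroup X] [NormedSpace ℝ X]
    [NormedAddCommGroup Y] [NormedSpace ℝ Y]
    (hX : 2 ≤ Module.rank ℝ X) (hY : Module.finrank ℝ Y = 2)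
    (hsc : ∀ a b : Y, a ≠ 0 → b ≠ 0 → ‖a + b‖ = ‖a‖ + ‖b‖ → ∃ γ : ℝ, 0 < γ ∧ a = γ • b)
    (ρ : ℝ) (hρ : 0 < ρ) (d : ℝ) (hd : 0 < d)
    (h1 : WitnessProp X Y ρ d) (h2 : WitnessProp X Y ρ (2 * d)) :
    ∀ k : ℕ, 0 < k → WitnessProp X Y ρ (k * d) :=
  witness_multiples_general hsc ρ d h1 h2
end

section
/- Let X and Y be real normed spaces with dim X ≥ dim Y = 2 and Y strictly convex, and let ρ > 0. If the finite-witness property (for injective ρ-distance-preserving maps into Y) holds for a distance d > 0 and for 2d, ..., then it holds for d/k for every positive integer k. -/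
/-- Existence of a point equidistant from two points, in dimension ≥ 2. -/
lemma exists_equidistant {X : Type*} [NormedAddCommGroup X] [NormedSpace ℝ X]
    (hX : 2 ≤ Module.rank ℝ X) {d : ℝ} (hd : 0 < d) {x y : X} (hxy : x ≠ y)
    (hle : ‖x - y‖ ≤ 2 * d) : ∃ z : X, ‖x - z‖ = d ∧ ‖y - z‖ = d := by
  have hrank : 1 < Module.rank ℝ X := lt_of_lt_of_le (by norm_num) hX
  have hconn : IsConnected (Metric.sphere x d) := isConnected_sphere hrank x hd.le
  have hyx : (0:ℝ) < ‖y - x‖ := by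
    rw [norm_pos_iff, sub_ne_zero]; exact hxy.symm
  set t : ℝ := d / ‖y - x‖ with ht
  have htpos : 0 < t := div_pos hd hyx
  set a : X := x + t • (y - x) with ha
  set b : X := x - t • (y - x) with hb
  have hnorm_smul : ‖t • (y - x)‖ = d := by
    rw [norm_smul, Real.norm_eq_abs, abs_of_pos htpos, ht, div_mul_cancel₀]
    exact hyx.ne'
  have haS : a ∈ Metric.sphere x d := by
    simp [Metric.mem_sphere, dist_eq_norm, ha, hnorm_smul]
  have hbS : b ∈ Metric.sphere x d := by
    simp [Metric.mem_sphere, dist_eq_norm, hb, norm_sub_rev, hnorm_smul]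
  set g : X → ℝ := fun z => ‖y - z‖ with hg
  have hga : g a = |‖y - x‖ - d| := by
    have : y - a = (1 - t) • (y - x) := by rw [ha]; module
    rw [hg]; simp only [this, norm_smul, Real.norm_eq_abs]
    rw [← abs_of_pos hyx, ← abs_mul]
    congr 1
    rw [abs_of_pos hyx, sub_mul, one_mul, ht, div_mul_cancel₀ _ hyx.ne']
  have hgb : g b = ‖y - x‖ + d := by
    have : y - b = (1 + t) • (y - x) := by rw [hb]; module
    rw [hg]; simp only [this, norm_smul, Real.norm_eq_abs]
    rw [abs_of_pos (by linarith), add_mul, one_mul, ht, div_mul_cancel₀ _ hyx.ne']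
  have hcont : ContinuousOn g (Metric.sphere x d) :=
    (continuous_const.sub continuous_id).norm.continuousOn
  have hmem : d ∈ Set.Icc (g a) (g b) := by
    constructor
    · rw [hga]; rw [abs_le]; constructor <;> [linarith [norm_nonneg (y - x)]; skip]
      rw [norm_sub_rev] at hle; linarith
    · rw [hgb]; linarith [norm_nonneg (y - x)]
  obtain ⟨z, hzS, hzg⟩ := hconn.isPreconnected.intermediate_value haS hbS hcont hmem
  refine ⟨z, ?_, ?_⟩
  · rw [norm_sub_rev]; simpa [Metric.mem_sphere, dist_eq_norm] using hzS
  · exact hzg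

/-- If the finite-witness property holds for all the distances `m·d` (`m` a positive
integer), then it holds for `d / k` for every positive integer `k`. -/
theorem witness_divisions {X Y : Type*} [NormedAddCommGroup X] [NormedSpace ℝ X]
    [NormedAddCommGroup Y] [NormedSpace ℝ Y]
    (hX : 2 ≤ Module.rank ℝ X) (hY : Module.finrank ℝ Y = 2)
    (hsc : ∀ a b : Y, a ≠ 0 → b ≠ 0 → ‖a + b‖ = ‖a‖ + ‖b‖ → ∃ γ : ℝ, 0 < γ ∧ a = γ • b)
    (ρ : ℝ) (hρ : 0 < ρ) (d : ℝ) (hd : 0 < d)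
    (h : ∀ m : ℕ, 0 < m → WitnessProp X Y ρ (m * d)) :
    ∀ k : ℕ, 0 < k → WitnessProp X Y ρ (d / k) := by
  intro k hk
  rcases eq_or_lt_of_le (show 1 ≤ k from hk) with h1 | h2
  · -- k = 1
    intro x y hxy
    exact h 1 one_pos x y (by rw [hxy, ← h1]; push_cast; ring)
  -- now 2 ≤ k
  intro x y hxy
  set kr : ℝ := (k : ℝ) with hkr
  have hkr1 : (1:ℝ) < kr := by rw [hkr]; exact_mod_cast h2
  have hkrpos : (0:ℝ) < kr := by linarith
  have hdk : ‖x - y‖ = d / kr := hxy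
  have hdkpos : (0:ℝ) < d / kr := div_pos hd hkrpos
  have hxy' : x ≠ y := by
    intro hc; rw [hc, sub_self, norm_zero] at hdk; linarith
  obtain ⟨z, hxz, hyz⟩ := exists_equidistant hX hd hxy'
    (by rw [hdk]; rw [div_le_iff₀ hkrpos] at *; nlinarith)
  set xt : X := x + (kr - 1) • (x - z) with hxt
  set yt : X := y + (kr - 1) • (y - z) with hyt
  -- distances
  have hk1 : ((k - 1 : ℕ) : ℝ) = kr - 1 := by
    rw [Nat.cast_sub (show 1 ≤ k from hk)]; simp [hkr]
  have hxtx : ‖xt - x‖ = ((k - 1 : ℕ) : ℝ) * d := by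
    rw [hk1, hxt, add_sub_cancel_left, norm_smul, Real.norm_eq_abs,
      abs_of_pos (by linarith), hxz]
  have hyty : ‖yt - y‖ = ((k - 1 : ℕ) : ℝ) * d := by
    rw [hk1, hyt, add_sub_cancel_left, norm_smul, Real.norm_eq_abs,
      abs_of_pos (by linarith), hyz]
  have hxtz : ‖xt - z‖ = (k : ℝ) * d := by
    have : xt - z = kr • (x - z) := by rw [hxt]; module
    rw [this, norm_smul, Real.norm_eq_abs, abs_of_pos hkrpos, hxz]
  have hytz : ‖yt - z‖ = (k : ℝ) * d := by
    have : yt - z = kr • (y - z) := by rw [hyt]; module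
    rw [this, norm_smul, Real.norm_eq_abs, abs_of_pos hkrpos, hyz]
  have hxtyt : ‖xt - yt‖ = ((1:ℕ) : ℝ) * d := by
    have : xt - yt = kr • (x - y) := by rw [hxt, hyt]; module
    rw [this, norm_smul, Real.norm_eq_abs, abs_of_pos hkrpos, hdk,
      mul_div_cancel₀ _ hkrpos.ne']
    simp
  have hxz1 : ‖x - z‖ = ((1:ℕ) : ℝ) * d := by rw [hxz]; simp
  have hyz1 : ‖y - z‖ = ((1:ℕ) : ℝ) * d := by rw [hyz]; simp
  have hk1pos : 0 < k - 1 := by omega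
  obtain ⟨S1, hm1a, hm1b, hf1⟩ := h 1 one_pos x z hxz1
  obtain ⟨S2, hm2a, hm2b, hf2⟩ := h 1 one_pos y z hyz1
  obtain ⟨S3, hm3a, hm3b, hf3⟩ := h (k-1) hk1pos xt x hxtx
  obtain ⟨S4, hm4a, hm4b, hf4⟩ := h (k-1) hk1pos yt y hyty
  obtain ⟨S5, hm5a, hm5b, hf5⟩ := h k hk xt z hxtz
  obtain ⟨S6, hm6a, hm6b, hf6⟩ := h k hk yt z hytz
  obtain ⟨S7, hm7a, hm7b, hf7⟩ := h 1 one_pos xt yt hxtyt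
  classical
  refine ⟨S1 ∪ S2 ∪ S3 ∪ S4 ∪ S5 ∪ S6 ∪ S7, by simp [hm1a], by simp [hm2a], ?_⟩
  intro f hinj hpres
  set S : Finset X := S1 ∪ S2 ∪ S3 ∪ S4 ∪ S5 ∪ S6 ∪ S7 with hS
  have sub1 : S1 ⊆ S := by intro a ha; simp [hS, ha]
  have sub2 : S2 ⊆ S := by intro a ha; simp [hS, ha]
  have sub3 : S3 ⊆ S := by intro a ha; simp [hS, ha]
  have sub4 : S4 ⊆ S := by intro a ha; simp [hS, ha]
  have sub5 : S5 ⊆ S := by intro a ha; simp [hS, ha]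
  have sub6 : S6 ⊆ S := by intro a ha; simp [hS, ha]
  have sub7 : S7 ⊆ S := by intro a ha; simp [hS, ha]
  have app : ∀ (T : Finset X), T ⊆ S → ∀ u v : X,
      (∀ g : X → Y, Set.InjOn g ↑T →
        (∀ a ∈ T, ∀ b ∈ T, ‖a - b‖ = ρ → ‖g a - g b‖ = ρ) → ‖g u - g v‖ = ‖u - v‖) →
      ‖f u - f v‖ = ‖u - v‖ := by
    intro T hT u v hw
    exact hw f (hinj.mono (by exact_mod_cast hT))
      (fun a ha b hb hab => hpres a (hT ha) b (hT hb) hab)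
  have e1 : ‖f x - f z‖ = d := by rw [app S1 sub1 x z hf1, hxz]
  have e2 : ‖f y - f z‖ = d := by rw [app S2 sub2 y z hf2, hyz]
  have e3 : ‖f xt - f x‖ = (kr - 1) * d := by
    rw [app S3 sub3 xt x hf3, hxtx, hk1]
  have e4 : ‖f yt - f y‖ = (kr - 1) * d := by
    rw [app S4 sub4 yt y hf4, hyty, hk1]
  have e5 : ‖f xt - f z‖ = kr * d := by rw [app S5 sub5 xt z hf5, hxtz]
  have e6 : ‖f yt - f z‖ = kr * d := by rw [app S6 sub6 yt z hf6, hytz]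
  have e7 : ‖f xt - f yt‖ = d := by
    rw [app S7 sub7 xt yt hf7, hxtyt]; simp
  -- strict convexity: f xt - f x = (kr - 1) • (f x - f z)
  have line : ∀ u w : X, ‖f u - f w‖ = (kr - 1) * d → ‖f w - f z‖ = d →
      ‖f u - f z‖ = kr * d → f u - f w = (kr - 1) • (f w - f z) := by
    intro u w hu hw huz
    have hane : f u - f w ≠ 0 := by
      intro hc; rw [hc, norm_zero] at hu; nlinarith
    have hbne : f w - f z ≠ 0 := by
      intro hc; rw [hc, norm_zero] at hw; linarith
    have hsum : ‖(f u - f w) + (f w - f z)‖ = ‖f u - f w‖ + ‖f w - f z‖ := by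
      rw [sub_add_sub_cancel, hu, hw, huz]; ring
    obtain ⟨γ, hγpos, hγ⟩ := hsc _ _ hane hbne hsum
    have : (kr - 1) * d = γ * d := by
      rw [← hu, hγ, norm_smul, Real.norm_eq_abs, abs_of_pos hγpos, hw]
    have hγeq : γ = kr - 1 := by
      have := mul_right_cancel₀ hd.ne' this; linarith
    rw [hγ, hγeq]
  have lx : f xt - f x = (kr - 1) • (f x - f z) := line xt x e3 e1 e5
  have ly : f yt - f y = (kr - 1) • (f y - f z) := line yt y e4 e2 e6
  have hfin : f xt - f yt = kr • (f x - f y) := by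
    have h1 : f xt = f x + (kr - 1) • (f x - f z) := by
      rw [← lx]; abel
    have h2 : f yt = f y + (kr - 1) • (f y - f z) := by
      rw [← ly]; abel
    rw [h1, h2]; module
  have : kr * ‖f x - f y‖ = d := by
    rw [← e7, hfin, norm_smul, Real.norm_eq_abs, abs_of_pos hkrpos]
  rw [hdk, ← this, mul_div_cancel_left₀ _ hkrpos.ne']
end

section
/- Let X and Y be real normed vector spaces with dim X ≥ dim Y = 2, Y strictly convex, and let ρ > 0 and ε > 0. For all x, y ∈ X there exists a finite set T ⊆ X containing x and y such that every injective map f : T → Y preserving the distance ρ satisfies | ||f(x)−f(y)|| − ||x−y|| | ≤ ε. -/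
/-!
In a strictly convex plane two circles of equal radius meet in at most two points. Hence three
equilateral triangles of side `ρ` glued into a strip are mapped by an injective map preserving `ρ`
to a straight strip, and such a map is affine along a ladder of equilateral triangles. Ladders
along the legs of an isosceles triangle `a x z` with legs `p ρ`, extended by the factor `q`, and a
third ladder across their far ends force `‖f x - f z‖ = (p / q) ρ`. For arbitrary `x` and `y`,
pass through a point `z` whose distances to `x` and `y` are rational multiples of `ρ`, the
second one at most `ε / 2`.
-/

open Metric

theorem Rat.exists_natCast_div_eq {r : ℚ} (hr : 0 < r) :
    ∃ p q : ℕ, 0 < p ∧ 0 < q ∧ (r : ℝ) = p / q := by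
  have hnum := Rat.num_pos.2 hr
  refine ⟨r.num.toNat, r.den, by omega, r.den_pos, ?_⟩
  rw [Rat.cast_def]
  congr 1
  exact_mod_cast (Int.toNat_of_nonneg hnum.le).symm

theorem LinearMap.exists_ker_eq_span_singleton {K E : Type*} [Field K] [AddCommGroup E]
    [Module K E] (hE : Module.finrank K E = 2) {v : E} (hv : v ≠ 0) :
    ∃ φ : E →ₗ[K] K, LinearMap.ker φ = K ∙ v := by
  have : FiniteDimensional K E := Module.finite_of_finrank_eq_succ hE
  have hquot : Module.finrank K (E ⧸ K ∙ v) = Module.finrank K K := by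
    have := (K ∙ v).finrank_quotient_add_finrank
    rw [finrank_span_singleton hv, hE] at this
    rw [Module.finrank_self]; omega
  refine ⟨(LinearEquiv.ofFinrankEq _ _ hquot).toLinearMap ∘ₗ (K ∙ v).mkQ, ?_⟩
  rw [LinearEquiv.ker_comp, Submodule.ker_mkQ]

section StrictConvex

variable {E : Type*} [NormedAddCommGroup E] [NormedSpace ℝ E]

theorem strictConvexSpace_of_norm_add_eq
    (h : ∀ a b : E, a ≠ 0 → b ≠ 0 → ‖a + b‖ = ‖a‖ + ‖b‖ → ∃ γ : ℝ, 0 < γ ∧ a = γ • b) :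
    StrictConvexSpace ℝ E := by
  refine StrictConvexSpace.of_norm_add fun a b ha hb hab => ?_
  obtain ⟨γ, hγ, rfl⟩ := h a b (by rintro rfl; simp at ha) (by rintro rfl; simp at hb)
    (by rw [hab, ha, hb]; norm_num)
  exact SameRay.sameRay_pos_smul_left b hγ

variable [StrictConvexSpace ℝ E]

theorem add_smul_mem_ball_of_lt_of_lt {c y v : E} {r t₁ t₂ t₃ : ℝ} (hv : v ≠ 0)
    (h₁₂ : t₁ < t₂) (h₂₃ : t₂ < t₃) (h₁ : y + t₁ • v ∈ closedBall c r)
    (h₃ : y + t₃ • v ∈ closedBall c r) : y + t₂ • v ∈ ball c r := by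
  have h₁₃ : t₃ - t₁ ≠ 0 := by linarith
  have hcombo : y + t₂ • v = ((t₃ - t₂) / (t₃ - t₁)) • (y + t₁ • v) +
      ((t₂ - t₁) / (t₃ - t₁)) • (y + t₃ • v) := by
    match_scalars <;> field_simp <;> ring
  rw [hcombo]
  refine combo_mem_ball_of_ne h₁ h₃ ?_ (div_pos (by linarith) (by linarith))
    (div_pos (by linarith) (by linarith)) (by field_simp; ring)
  rw [Ne, add_right_inj]
  exact fun h => h₁₂.ne (by linarith [smul_left_injective ℝ hv h])

theorem eq_zero_of_add_smul_mem_closedBall_inter {c₁ c₂ m : E} {r s : ℝ} (hc : c₁ ≠ c₂)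
    (hm : m ∈ sphere c₁ r ∩ sphere c₂ r)
    (hs : m + s • (c₂ - c₁) ∈ closedBall c₁ r ∩ closedBall c₂ r) : s = 0 := by
  set v := c₂ - c₁
  have hv : v ≠ 0 := sub_ne_zero.2 hc.symm
  have shift : ∀ (y : E) (t : ℝ),
      y + t • v ∈ closedBall c₂ r ↔ y + (t - 1) • v ∈ closedBall c₁ r := by
    intro y t
    simp only [mem_closedBall_iff_norm]
    congr! 2
    simp only [v]; module
  have hm₁ : m + (0 : ℝ) • v ∈ sphere c₁ r := by simpa using hm.1
  have hm₂ : m + (-1 : ℝ) • v ∈ sphere c₁ r := by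
    have := hm.2
    rw [mem_sphere_iff_norm] at this ⊢
    rw [← this]; congr 1; simp only [v]; module
  have hs₂ := (shift m s).1 hs.2
  have not_ball : ∀ y ∈ sphere c₁ r, y ∉ ball c₁ r := fun y hy =>
    Set.disjoint_left.1 sphere_disjoint_ball hy
  rcases lt_trichotomy s 0 with hneg | hzero | hpos
  · exact absurd (add_smul_mem_ball_of_lt_of_lt hv (by linarith) (show (-1 : ℝ) < 0 by norm_num)
      hs₂ (sphere_subset_closedBall hm₁)) (not_ball _ hm₂)
  · exact hzero
  · exact absurd (add_smul_mem_ball_of_lt_of_lt hv (show (-1 : ℝ) < 0 by norm_num) hpos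
      (sphere_subset_closedBall hm₂) hs.1) (not_ball _ hm₁)

theorem eq_of_mem_sphere_inter_sphere (hE : Module.finrank ℝ E = 2) {c₁ c₂ p q s : E} {r : ℝ}
    (hc : c₁ ≠ c₂) (hp : p ∈ sphere c₁ r ∩ sphere c₂ r) (hq : q ∈ sphere c₁ r ∩ sphere c₂ r)
    (hs : s ∈ sphere c₁ r ∩ sphere c₂ r) (hpq : p ≠ q) (hps : p ≠ s) : q = s := by
  set S := sphere c₁ r ∩ sphere c₂ r
  have hS : S ⊆ closedBall c₁ r ∩ closedBall c₂ r :=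
    Set.inter_subset_inter sphere_subset_closedBall sphere_subset_closedBall
  obtain ⟨φ, hφ⟩ := LinearMap.exists_ker_eq_span_singleton hE (sub_ne_zero.2 hc.symm)
  have on_line : ∀ y m : E, φ y = φ m → ∃ t : ℝ, y = m + t • (c₂ - c₁) := by
    intro y m h
    have : y - m ∈ LinearMap.ker φ := by simp [h]
    rw [hφ, Submodule.mem_span_singleton] at this
    obtain ⟨t, ht⟩ := this
    exact ⟨t, by rw [ht]; abel⟩
  have inj : Set.InjOn φ S := by
    intro y hy m hm h
    obtain ⟨t, rfl⟩ := on_line y m h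
    rw [eq_zero_of_add_smul_mem_closedBall_inter hc hm (hS hy), zero_smul, add_zero]
  -- the open segment between the outer two points would meet the lens on the line through the
  -- middle one parallel to `c₂ - c₁`
  have no_middle : ∀ y ∈ S, ∀ y' ∈ S, ∀ m ∈ S, φ y < φ m → φ m < φ y' → False := by
    intro y hy y' hy' m hm h₁ h₂
    set τ := (φ m - φ y) / (φ y' - φ y)
    have hτ₀ : 0 < τ := div_pos (by linarith) (by linarith)
    have hτ₁ : 0 < 1 - τ := by rw [sub_pos, div_lt_one (by linarith)]; linarith
    have hne : y' ≠ y := fun h => by rw [h] at h₂; linarith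
    have hφ : φ (τ • y' + (1 - τ) • y) = φ m := by
      have : φ y' - φ y ≠ 0 := by linarith
      simp only [map_add, map_smul, smul_eq_mul, τ]
      field_simp
      ring
    obtain ⟨t, ht⟩ := on_line _ m hφ
    have hball : τ • y' + (1 - τ) • y ∈ ball c₁ r ∩ ball c₂ r :=
      ⟨combo_mem_ball_of_ne (hS hy').1 (hS hy).1 hne hτ₀ hτ₁ (by ring),
        combo_mem_ball_of_ne (hS hy').2 (hS hy).2 hne hτ₀ hτ₁ (by ring)⟩
    have ht₀ : t = 0 := eq_zero_of_add_smul_mem_closedBall_inter hc hm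
      (ht ▸ Set.inter_subset_inter ball_subset_closedBall ball_subset_closedBall hball)
    rw [ht, ht₀, zero_smul, add_zero] at hball
    exact Set.disjoint_left.1 sphere_disjoint_ball hm.1 hball.1
  by_contra hqs
  have hφpq := inj.ne hp hq hpq
  have hφps := inj.ne hp hs hps
  have hφqs := inj.ne hq hs hqs
  rcases hφpq.lt_or_gt with h₁ | h₁ <;> rcases hφps.lt_or_gt with h₂ | h₂ <;>
    rcases hφqs.lt_or_gt with h₃ | h₃
  all_goals first
    | linarith
    | exact no_middle _ hp _ hs _ hq h₁ h₃
    | exact no_middle _ hs _ hp _ hq h₃ h₁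
    | exact no_middle _ hq _ hs _ hp h₁ h₂
    | exact no_middle _ hs _ hq _ hp h₂ h₁
    | exact no_middle _ hp _ hq _ hs h₂ h₃
    | exact no_middle _ hq _ hp _ hs h₃ h₂

/-- Three equilateral triangles `AMC`, `CMD`, `DMB` of side `ρ` glued along `MC` and `MD` form a
straight strip. -/
theorem sub_eq_sub_of_triangle_strip (hE : Module.finrank ℝ E = 2) {ρ : ℝ} (hρ : 0 < ρ)
    {A M B C D : E} (hAM : ‖M - A‖ = ρ) (hMB : ‖B - M‖ = ρ) (hCA : ‖C - A‖ = ρ)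
    (hCM : ‖C - M‖ = ρ) (hDM : ‖D - M‖ = ρ) (hDB : ‖D - B‖ = ρ) (hDC : ‖D - C‖ = ρ)
    (hDA : D ≠ A) (hBC : B ≠ C) : B - M = M - A := by
  have mem : ∀ {y c c' : E}, ‖y - c‖ = ρ → ‖y - c'‖ = ρ → y ∈ sphere c ρ ∩ sphere c' ρ :=
    fun h h' => ⟨mem_sphere_iff_norm.2 h, mem_sphere_iff_norm.2 h'⟩
  have ne_of_norm : ∀ {y c : E}, ‖y - c‖ = ρ → c ≠ y := fun h hc => by
    rw [hc, sub_self, norm_zero] at h; exact hρ.ne h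
  have ne_two_smul : ∀ {y c w : E}, ‖y - c‖ = ρ → ‖w - c‖ = ρ → w - c ≠ (2 : ℝ) • (y - c) :=
    fun hy hw h => by rw [h, norm_smul, hy, Real.norm_two] at hw; linarith
  -- `A`, `D`, `M + C - A` lie on the spheres of radius `ρ` about `M` and `C`, and then `C`, `B`,
  -- `M + M - A` on those about `M` and `D`
  have hD : D = M + C - A := by
    refine eq_of_mem_sphere_inter_sphere hE (ne_of_norm hCM) (mem (norm_sub_rev A M ▸ hAM) ?_)
      (mem hDM hDC) (mem ?_ ?_) (Ne.symm hDA) fun h => ne_two_smul (y := A) ?_ hCM ?_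
    · rwa [norm_sub_rev]
    · convert hCA using 2; abel
    · convert hAM using 2; abel
    · rwa [norm_sub_rev]
    · linear_combination (norm := module) -h
  have hB : B = M + M - A := by
    refine eq_of_mem_sphere_inter_sphere hE (ne_of_norm hDM) (mem hCM ?_) (mem hMB ?_) (mem ?_ ?_)
      (Ne.symm hBC) fun h => ne_two_smul (c := A) (y := M) hAM hCA ?_
    · rwa [norm_sub_rev]
    · rwa [norm_sub_rev]
    · convert hAM using 2; abel
    · rw [hD, ← hCM, norm_sub_rev]; congr 1; abel
    · linear_combination (norm := module) h
  rw [hB]; abel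

end StrictConvex

section Ladder

variable {X Y : Type*} [NormedAddCommGroup X] [NormedAddCommGroup Y]

def PreservesDistOn (f : X → Y) (s : Set X) (ρ : ℝ) : Prop :=
  ∀ a ∈ s, ∀ b ∈ s, ‖a - b‖ = ρ → ‖f a - f b‖ = ρ

theorem PreservesDistOn.mono {f : X → Y} {s t : Set X} {ρ : ℝ} (h : PreservesDistOn f t ρ)
    (hst : s ⊆ t) : PreservesDistOn f s ρ :=
  fun a ha b hb => h a (hst ha) b (hst hb)

variable [NormedSpace ℝ X]

/-- When `‖V‖ = ‖n‖ = ‖n - V‖ = ρ`, a strip of `2 N` equilateral triangles of side `ρ`. -/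
def ladder (a V n : X) (N : ℕ) : Set X :=
  ⋃ i ∈ Set.Iic N, {a + (i : ℝ) • V, a + (i : ℝ) • V + n}

theorem ladder_finite (a V n : X) (N : ℕ) : (ladder a V n N).Finite :=
  (Set.finite_Iic N).biUnion fun _ _ => Set.toFinite _

theorem add_smul_mem_ladder {a V n : X} {i N : ℕ} (hi : i ≤ N) :
    a + (i : ℝ) • V ∈ ladder a V n N :=
  Set.mem_biUnion (Set.mem_Iic.2 hi) (Set.mem_insert _ _)

theorem add_smul_add_mem_ladder {a V n : X} {i N : ℕ} (hi : i ≤ N) :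
    a + (i : ℝ) • V + n ∈ ladder a V n N :=
  Set.mem_biUnion (Set.mem_Iic.2 hi) (Set.mem_insert_of_mem _ rfl)

variable [NormedSpace ℝ Y] [StrictConvexSpace ℝ Y]

theorem map_add_add_sub_map_add (hY : Module.finrank ℝ Y = 2) {ρ : ℝ} (hρ : 0 < ρ)
    {T : Set X} {f : X → Y} (hinj : Set.InjOn f T) (hf : PreservesDistOn f T ρ) {a V n : X}
    (hV : ‖V‖ = ρ) (hn : ‖n‖ = ρ) (hnV : ‖n - V‖ = ρ)
    (hT : {a, a + V, a + V + V, a + n, a + V + n} ⊆ T) :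
    f (a + V + V) - f (a + V) = f (a + V) - f a := by
  simp only [Set.insert_subset_iff, Set.singleton_subset_iff] at hT
  obtain ⟨hA, hM, hB, hC, hD⟩ := hT
  have hdist : ∀ p ∈ T, ∀ q ∈ T, ∀ w : X, ‖w‖ = ρ → p - q = w → ‖f p - f q‖ = ρ :=
    fun p hp q hq w hw h => hf p hp q hq (h ▸ hw)
  have h2V : ‖(2 : ℝ) • V‖ ≠ ρ := by rw [norm_smul, hV, Real.norm_two]; linarith
  refine sub_eq_sub_of_triangle_strip hY hρ (hdist _ hM _ hA V hV (by abel))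
    (hdist _ hB _ hM V hV (by abel)) (hdist _ hC _ hA n hn (by abel))
    (hdist _ hC _ hM _ hnV (by abel)) (hdist _ hD _ hM n hn (by abel))
    (hdist _ hD _ hB _ hnV (by abel)) (hdist _ hD _ hC V hV (by abel))
    (hinj.ne hD hA fun h => h2V ?_) (hinj.ne hB hC fun h => h2V ?_)
  · rw [← hnV, ← norm_neg (n - V)]; congr 1; linear_combination (norm := module) h
  · rw [← hn]; congr 1; linear_combination (norm := module) h

theorem map_add_smul_of_ladder_subset (hY : Module.finrank ℝ Y = 2) {ρ : ℝ} (hρ : 0 < ρ)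
    {T : Set X} {f : X → Y} (hinj : Set.InjOn f T) (hf : PreservesDistOn f T ρ) {a V n : X}
    (hV : ‖V‖ = ρ) (hn : ‖n‖ = ρ) (hnV : ‖n - V‖ = ρ) {N : ℕ} (hT : ladder a V n N ⊆ T)
    {i : ℕ} (hi : i ≤ N) : f (a + (i : ℝ) • V) = f a + (i : ℝ) • (f (a + V) - f a) := by
  have succ : ∀ j : ℕ, a + (j : ℝ) • V + V = a + ((j + 1 : ℕ) : ℝ) • V := fun j => by
    push_cast; module
  induction i using Nat.twoStepInduction with
  | zero => simp
  | one => simp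
  | more k ih₀ ih₁ =>
    have step := map_add_add_sub_map_add hY hρ hinj hf (a := a + (k : ℝ) • V) hV hn hnV (by
      simp only [Set.insert_subset_iff, Set.singleton_subset_iff, succ]
      exact ⟨hT (add_smul_mem_ladder (by omega)), hT (add_smul_mem_ladder (by omega)),
        hT (add_smul_mem_ladder hi), hT (add_smul_add_mem_ladder (by omega)),
        hT (add_smul_add_mem_ladder (by omega))⟩)
    rw [succ, succ, ih₀ (by omega), ih₁ (by omega)] at step
    rw [show k + 2 = k + 1 + 1 from rfl]
    push_cast at step ⊢
    linear_combination (norm := module) step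

theorem norm_map_add_smul_sub_of_ladder_subset (hY : Module.finrank ℝ Y = 2) {ρ : ℝ}
    (hρ : 0 < ρ) {T : Set X} {f : X → Y} (hinj : Set.InjOn f T) (hf : PreservesDistOn f T ρ)
    {a V n : X} (hV : ‖V‖ = ρ) (hn : ‖n‖ = ρ) (hnV : ‖n - V‖ = ρ) {N : ℕ}
    (hT : ladder a V n N ⊆ T) : ‖f (a + (N : ℝ) • V) - f a‖ = N * ρ := by
  rcases N.eq_zero_or_pos with rfl | hN
  · simp
  have hstep : ‖f (a + V) - f a‖ = ρ :=
    hf _ (hT (by simpa using add_smul_mem_ladder (a := a) (V := V) (n := n) hN))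
      _ (hT (by simpa using add_smul_mem_ladder (a := a) (V := V) (n := n) N.zero_le))
      (by rwa [add_sub_cancel_left])
  rw [map_add_smul_of_ladder_subset hY hρ hinj hf hV hn hnV hT le_rfl, add_sub_cancel_left,
    norm_smul, Real.norm_natCast, hstep]

end Ladder

section Construction

variable {X Y : Type*} [NormedAddCommGroup X] [NormedSpace ℝ X]

theorem exists_norm_sub_eq_norm_sub_eq (hX : 2 ≤ Module.rank ℝ X) {x z : X} (hxz : x ≠ z)
    {r s : ℝ} (h₁ : |r - s| ≤ ‖x - z‖) (h₂ : ‖x - z‖ ≤ r + s) :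
    ∃ a, ‖a - x‖ = r ∧ ‖a - z‖ = s := by
  set d := ‖x - z‖
  have hd : 0 < d := norm_pos_iff.2 (sub_ne_zero.2 hxz)
  rw [abs_le] at h₁
  have hr : 0 ≤ r := by linarith
  have hzx : ‖z - x‖ = d := norm_sub_rev z x
  have on_sphere : ∀ t : ℝ, |t| = r / d → x + t • (z - x) ∈ sphere x r := fun t ht => by
    rw [mem_sphere_iff_norm, add_sub_cancel_left, norm_smul, Real.norm_eq_abs, ht, hzx,
      div_mul_cancel₀ _ hd.ne']
  have hnear : ‖x + (r / d) • (z - x) - z‖ = |r - d| := by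
    rw [show x + (r / d) • (z - x) - z = (r / d - 1) • (z - x) by module, norm_smul,
      Real.norm_eq_abs, hzx, ← abs_of_pos hd, ← abs_mul, abs_of_pos hd]
    congr 1; field_simp
  have hfar : ‖x + (-(r / d)) • (z - x) - z‖ = r + d := by
    rw [show x + (-(r / d)) • (z - x) - z = (-(r / d + 1)) • (z - x) by module, norm_smul,
      norm_neg, Real.norm_of_nonneg (by positivity), hzx]
    field_simp
  have hs : s ∈ Set.Icc ‖x + (r / d) • (z - x) - z‖ ‖x + (-(r / d)) • (z - x) - z‖ := by
    rw [hnear, hfar, Set.mem_Icc, abs_le]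
    exact ⟨by constructor <;> linarith, by linarith⟩
  obtain ⟨a, ha, has⟩ :=
    (isConnected_sphere (Cardinal.one_lt_two.trans_le hX) x hr).isPreconnected.intermediate_value
      (on_sphere (r / d) (abs_of_nonneg (by positivity)))
      (on_sphere (-(r / d)) (by rw [abs_neg, abs_of_nonneg (by positivity)]))
      (f := fun a => ‖a - z‖) (by fun_prop) hs
  exact ⟨a, mem_sphere_iff_norm.1 ha, has⟩

theorem exists_norm_eq_norm_sub_eq (hX : 2 ≤ Module.rank ℝ X) {V : X} (hV : V ≠ 0) :
    ∃ n : X, ‖n‖ = ‖V‖ ∧ ‖n - V‖ = ‖V‖ := by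
  simpa using exists_norm_sub_eq_norm_sub_eq hX hV.symm (r := ‖V‖) (s := ‖V‖)
    (by rw [sub_self, abs_zero]; positivity) (by rw [zero_sub, norm_neg]; linarith [norm_nonneg V])

theorem exists_norm_sub_eq_ratCast_mul (hX : 2 ≤ Module.rank ℝ X) {x y : X} (hxy : x ≠ y)
    {ρ δ : ℝ} (hρ : 0 < ρ) (hδ : 0 < δ) :
    ∃ z : X, ∃ r₁ r₂ : ℚ, 0 < r₁ ∧ 0 < r₂ ∧ ‖x - z‖ = r₁ * ρ ∧ ‖z - y‖ = r₂ * ρ ∧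
      ‖z - y‖ ≤ δ := by
  set d := ‖x - y‖
  have hd : 0 < d := norm_pos_iff.2 (sub_ne_zero.2 hxy)
  obtain ⟨r₂, hr₂, hr₂d⟩ := exists_rat_btwn (div_pos (lt_min hδ hd) hρ)
  rw [lt_div_iff₀ hρ, lt_min_iff] at hr₂d
  have hr₂ρ : 0 < (r₂ : ℝ) * ρ := by positivity
  obtain ⟨r₁, hr₁, hr₁d⟩ := exists_rat_btwn (div_lt_div_of_pos_right (sub_lt_self d hr₂ρ) hρ)
  rw [div_lt_iff₀ hρ] at hr₁
  rw [lt_div_iff₀ hρ] at hr₁d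
  have hr₁ρ : 0 < (r₁ : ℝ) * ρ := by linarith
  obtain ⟨z, hzx, hzy⟩ := exists_norm_sub_eq_norm_sub_eq hX hxy (r := r₁ * ρ) (s := r₂ * ρ)
    (by rw [abs_le]; constructor <;> linarith) (by linarith)
  exact ⟨z, r₁, r₂, Rat.cast_pos.1 (pos_of_mul_pos_left hr₁ρ hρ.le),
    Rat.cast_pos.1 (pos_of_mul_pos_left hr₂ρ hρ.le), (norm_sub_rev x z).trans hzx, hzy,
    hzy ▸ hr₂d.1.le⟩

variable [NormedAddCommGroup Y] [NormedSpace ℝ Y] [StrictConvexSpace ℝ Y]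

theorem exists_finite_forcing_norm_map_add_smul_sub (hX : 2 ≤ Module.rank ℝ X)
    (hY : Module.finrank ℝ Y = 2) {ρ : ℝ} (hρ : 0 < ρ) {a V₁ V₂ : X} (hV₁ : ‖V₁‖ = ρ)
    (hV₂ : ‖V₂‖ = ρ) {p q : ℕ} (hV : (q : ℝ) * ‖V₂ - V₁‖ = ρ) :
    ∃ T : Set X, T.Finite ∧ a + (p : ℝ) • V₁ ∈ T ∧ a + (p : ℝ) • V₂ ∈ T ∧
      ∀ f : X → Y, Set.InjOn f T → PreservesDistOn f T ρ →
        ‖f (a + (p : ℝ) • V₂) - f (a + (p : ℝ) • V₁)‖ = p * ‖V₂ - V₁‖ := by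
  have hq : 0 < q := Nat.pos_of_ne_zero fun h => by simp [h] at hV; linarith
  set P := a + ((p * q : ℕ) : ℝ) • V₁
  set W := (q : ℝ) • (V₂ - V₁)
  have hW : ‖W‖ = ρ := by rw [norm_smul, Real.norm_natCast, hV]
  have hQ : a + ((p * q : ℕ) : ℝ) • V₂ = P + (p : ℝ) • W := by simp only [P, W]; push_cast; module
  have equilateral : ∀ V : X, ‖V‖ = ρ → ∃ n : X, ‖n‖ = ρ ∧ ‖n - V‖ = ρ := fun V hV => by
    rw [← hV]; exact exists_norm_eq_norm_sub_eq hX (norm_pos_iff.1 (hV ▸ hρ))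
  obtain ⟨n₁, hn₁, hnV₁⟩ := equilateral V₁ hV₁
  obtain ⟨n₂, hn₂, hnV₂⟩ := equilateral V₂ hV₂
  obtain ⟨n₃, hn₃, hnW⟩ := equilateral W hW
  have hpN : p ≤ p * q := Nat.le_mul_of_pos_right p hq
  refine ⟨ladder a V₁ n₁ (p * q) ∪ ladder a V₂ n₂ (p * q) ∪ ladder P W n₃ p,
    ((ladder_finite ..).union (ladder_finite ..)).union (ladder_finite ..),
    Or.inl (Or.inl (add_smul_mem_ladder hpN)), Or.inl (Or.inr (add_smul_mem_ladder hpN)),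
    fun f hinj hf => ?_⟩
  have affine₁ := fun {i} => map_add_smul_of_ladder_subset hY hρ hinj hf hV₁ hn₁ hnV₁
    (Set.subset_union_left.trans Set.subset_union_left) (i := i)
  have affine₂ := fun {i} => map_add_smul_of_ladder_subset hY hρ hinj hf hV₂ hn₂ hnV₂
    (Set.subset_union_right.trans Set.subset_union_left) (i := i)
  have hnorm := norm_map_add_smul_sub_of_ladder_subset hY hρ hinj hf hW hn₃ hnW
    Set.subset_union_right
  -- `f` is affine along the three ladders, which meet at `a`, `P` and `P + p • W`
  have hQP : f (P + (p : ℝ) • W) - f P =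
      (q : ℝ) • (f (a + (p : ℝ) • V₂) - f (a + (p : ℝ) • V₁)) := by
    have hP : f P = f a + ((p : ℝ) * q) • (f (a + V₁) - f a) := by
      rw [← Nat.cast_mul]; exact affine₁ le_rfl
    have hQ' : f (P + (p : ℝ) • W) = f a + ((p : ℝ) * q) • (f (a + V₂) - f a) := by
      rw [← hQ, ← Nat.cast_mul]; exact affine₂ le_rfl
    rw [hP, hQ', affine₁ hpN, affine₂ hpN]
    module
  have hq' : (0 : ℝ) < q := by exact_mod_cast hq
  rw [hQP, norm_smul, Real.norm_natCast, ← hV] at hnorm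
  exact mul_left_cancel₀ hq'.ne' (by rw [hnorm]; ring)

theorem exists_finite_forcing_of_norm_sub_eq_ratCast_mul (hX : 2 ≤ Module.rank ℝ X)
    (hY : Module.finrank ℝ Y = 2) {ρ : ℝ} (hρ : 0 < ρ) {x z : X} {r : ℚ} (hr : 0 < r)
    (hxz : ‖x - z‖ = r * ρ) :
    ∃ T : Set X, T.Finite ∧ x ∈ T ∧ z ∈ T ∧
      ∀ f : X → Y, Set.InjOn f T → PreservesDistOn f T ρ → ‖f x - f z‖ = ‖x - z‖ := by
  obtain ⟨p, q, hp, hq, hpq⟩ := Rat.exists_natCast_div_eq hr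
  rw [hpq] at hxz
  have hp' : (0 : ℝ) < p := by exact_mod_cast hp
  have hq' : (0 : ℝ) < q := by exact_mod_cast hq
  have hxz₀ : x ≠ z := by
    rw [← sub_ne_zero, ← norm_ne_zero_iff, hxz]; positivity
  -- apex of the isosceles triangle over `x z` with legs `p * ρ`
  obtain ⟨a, hax, haz⟩ := exists_norm_sub_eq_norm_sub_eq hX hxz₀ (r := p * ρ) (s := p * ρ)
    (by rw [sub_self, abs_zero]; positivity) (by
      rw [hxz]
      have : (p : ℝ) / q ≤ p := div_le_self hp'.le (by exact_mod_cast hq)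
      nlinarith)
  have norm_inv_smul : ∀ w : X, ‖w‖ = p * ρ → ‖(p : ℝ)⁻¹ • w‖ = ρ := fun w hw => by
    rw [norm_smul, hw, norm_inv, Real.norm_natCast, inv_mul_cancel_left₀ hp'.ne']
  have hx : a + (p : ℝ) • ((p : ℝ)⁻¹ • (x - a)) = x := by
    rw [smul_inv_smul₀ hp'.ne']; abel
  have hz : a + (p : ℝ) • ((p : ℝ)⁻¹ • (z - a)) = z := by
    rw [smul_inv_smul₀ hp'.ne']; abel
  have hV : (p : ℝ)⁻¹ • (z - a) - (p : ℝ)⁻¹ • (x - a) = (p : ℝ)⁻¹ • (z - x) := by module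
  obtain ⟨T, hT, hxT, hzT, hforce⟩ := exists_finite_forcing_norm_map_add_smul_sub hX hY hρ
    (norm_inv_smul _ (by rw [norm_sub_rev, hax])) (norm_inv_smul _ (by rw [norm_sub_rev, haz]))
    (q := q) (by
      rw [hV, norm_smul, norm_sub_rev, hxz, norm_inv, Real.norm_natCast]; field_simp)
  rw [hx] at hxT hforce
  rw [hz] at hzT hforce
  refine ⟨T, hT, hxT, hzT, fun f hinj hf => ?_⟩
  rw [norm_sub_rev, hforce f hinj hf, hV, norm_smul, norm_sub_rev, norm_inv, Real.norm_natCast,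
    mul_inv_cancel_left₀ hp'.ne']

end Construction

theorem abs_norm_sub_sub_norm_sub_le {X Y : Type*} [NormedAddCommGroup X] [NormedAddCommGroup Y]
    {a b c : Y} {x y z : X}
    (h₁ : ‖a - b‖ = ‖x - z‖) (h₂ : ‖b - c‖ = ‖z - y‖) : |‖a - c‖ - ‖x - y‖| ≤ 2 * ‖z - y‖ := by
  rw [abs_le]
  constructor <;> linarith [norm_sub_le_norm_sub_add_norm_sub a b c,
    norm_sub_le_norm_sub_add_norm_sub a c b, norm_sub_rev c b,
    norm_sub_le_norm_sub_add_norm_sub x z y, norm_sub_le_norm_sub_add_norm_sub x y z,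
    norm_sub_rev y z]

/-- Item 2 of the Theorem: for all `x, y ∈ X` and `ε > 0` there exists a finite set `T`
containing `x` and `y` such that every injective map `f : T → Y` preserving the
distance `ρ` preserves the distance between `x` and `y` to within `ε`. -/
theorem discrete_beckman_quarles_approx {X Y : Type*}
    [NormedAddCommGroup X] [NormedSpace ℝ X] [NormedAddCommGroup Y] [NormedSpace ℝ Y]
    (hX : 2 ≤ Module.rank ℝ X) (hY : Module.finrank ℝ Y = 2)
    (hsc : ∀ a b : Y, a ≠ 0 → b ≠ 0 → ‖a + b‖ = ‖a‖ + ‖b‖ → ∃ γ : ℝ, 0 < γ ∧ a = γ • b)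
    (ρ : ℝ) (hρ : 0 < ρ) (ε : ℝ) (hε : 0 < ε) (x y : X) :
    ∃ T : Finset X, x ∈ T ∧ y ∈ T ∧
      ∀ f : X → Y, Set.InjOn f ↑T →
        (∀ a ∈ T, ∀ b ∈ T, ‖a - b‖ = ρ → ‖f a - f b‖ = ρ) →
        |‖f x - f y‖ - ‖x - y‖| ≤ ε := by
  have := strictConvexSpace_of_norm_add_eq hsc
  rcases eq_or_ne x y with rfl | hxy
  · exact ⟨{x}, Finset.mem_singleton_self x, Finset.mem_singleton_self x,
      fun f _ _ => by simpa using hε.le⟩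
  obtain ⟨z, r₁, r₂, hr₁, hr₂, hxz, hzy, hzyε⟩ :=
    exists_norm_sub_eq_ratCast_mul hX hxy hρ (half_pos hε)
  obtain ⟨T₁, hT₁, hxT₁, -, force₁⟩ :=
    exists_finite_forcing_of_norm_sub_eq_ratCast_mul (Y := Y) hX hY hρ hr₁ hxz
  obtain ⟨T₂, hT₂, -, hyT₂, force₂⟩ :=
    exists_finite_forcing_of_norm_sub_eq_ratCast_mul (Y := Y) hX hY hρ hr₂ hzy
  refine ⟨(hT₁.union hT₂).toFinset, by simp [hxT₁], by simp [hyT₂], fun f hinj hf => ?_⟩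
  have hf' : PreservesDistOn f (hT₁.union hT₂).toFinset ρ := hf
  rw [Set.Finite.coe_toFinset] at hinj hf'
  calc |‖f x - f y‖ - ‖x - y‖| ≤ 2 * ‖z - y‖ := abs_norm_sub_sub_norm_sub_le
        (force₁ f (hinj.mono Set.subset_union_left) (hf'.mono Set.subset_union_left))
        (force₂ f (hinj.mono Set.subset_union_right) (hf'.mono Set.subset_union_right))
    _ ≤ ε := by linarith
end

section
/- In euclidean ℝⁿ (n ≥ 2), for any x, y with |x − y| = 2d > 0 there exist 11 points x, y, z = (x+y)/2, x₁, y₁, x̃, ỹ, x̃₁, ỹ₁, z_x, z_y realizing the graph Γ of Figure 5: all 19 specified pairs are at euclidean distance exactly d. -/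
/-- The 19 edges of the graph `Γ` of Figure 5, on the 11 vertices
`v₀ = x`, `v₁ = y`, `v₂ = (x+y)/2`, `v₃ = x̃`, `v₄ = x₁`, `v₅ = x̃₁`, `v₆ = ỹ`,
`v₇ = y₁`, `v₈ = ỹ₁`, `v₉ = z_x`, `v₁₀ = z_y`. -/
def fig5Edges : Fin 19 → Fin 11 × Fin 11 :=
  ![(0, 2), (0, 3), (0, 7), (1, 2), (1, 4), (1, 6), (2, 4), (2, 7), (3, 8), (3, 10),
    (4, 7), (4, 8), (4, 10), (5, 6), (5, 7), (5, 9), (6, 9), (7, 9), (8, 10)]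

/-- In euclidean `ℝⁿ` with `n ≥ 2`, every vector has an orthogonal unit vector. -/
lemma exists_unit_orthogonal (n : ℕ) (hn : 2 ≤ n) (u : EuclideanSpace ℝ (Fin n)) :
    ∃ w : EuclideanSpace ℝ (Fin n), ‖w‖ = 1 ∧ (inner ℝ u w : ℝ) = 0 := by
  have hfin : Module.finrank ℝ (EuclideanSpace ℝ (Fin n)) = n := finrank_euclideanSpace_fin
  have hsum := Submodule.finrank_add_finrank_orthogonal (K := (ℝ ∙ u))
  have hle : Module.finrank ℝ (ℝ ∙ u) ≤ 1 := by
    rcases eq_or_ne u 0 with h | h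
    · subst h
      rw [Submodule.span_zero_singleton]
      simp [finrank_bot]
    · rw [finrank_span_singleton h]
  have hpos : 0 < Module.finrank ℝ (ℝ ∙ u)ᗮ := by omega
  have hbot : (ℝ ∙ u)ᗮ ≠ ⊥ := by
    intro h
    rw [h, finrank_bot] at hpos
    exact lt_irrefl 0 hpos
  obtain ⟨v, hvmem, hvne⟩ := Submodule.exists_mem_ne_zero_of_ne_bot hbot
  refine ⟨‖v‖⁻¹ • v, ?_, ?_⟩
  · rw [norm_smul, norm_inv, norm_norm, inv_mul_cancel₀ (norm_ne_zero_iff.mpr hvne)]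
  · rw [real_inner_smul_right,
      Submodule.mem_orthogonal_singleton_iff_inner_right.mp hvmem, mul_zero]

/-- In euclidean `ℝⁿ` (`n ≥ 2`), for any `x, y` with `‖x - y‖ = 2d > 0` there exist
11 points `p 0 = x`, `p 1 = y`, `p 2 = (x+y)/2`, ... realizing the graph `Γ` of
Figure 5: all 19 specified pairs are at euclidean distance exactly `d`. -/
theorem fig5_configuration_euclidean (n : ℕ) (hn : 2 ≤ n) (d : ℝ) (hd : 0 < d)
    (x y : EuclideanSpace ℝ (Fin n)) (hxy : ‖x - y‖ = 2 * d) :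
    ∃ p : Fin 11 → EuclideanSpace ℝ (Fin n),
      p 0 = x ∧ p 1 = y ∧ p 2 = (1 / 2 : ℝ) • (x + y) ∧
      ∀ k : Fin 19, ‖p (fig5Edges k).1 - p (fig5Edges k).2‖ = d := by
  have hdne : d ≠ 0 := ne_of_gt hd
  set u : EuclideanSpace ℝ (Fin n) := (1 / (2 * d)) • (y - x) with hu_def
  have hu : ‖u‖ = 1 := by
    rw [hu_def, norm_smul, ← norm_neg (y - x), neg_sub, hxy]
    rw [Real.norm_eq_abs, abs_of_pos (by positivity)]
    field_simp
  obtain ⟨w, hw, huw⟩ := exists_unit_orthogonal n hn u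
  set z : EuclideanSpace ℝ (Fin n) := (1 / 2 : ℝ) • (x + y) with hz_def
  set s3 : ℝ := Real.sqrt 3 with hs3_def
  set s11 : ℝ := Real.sqrt 11 with hs11_def
  have h3 : s3 ^ 2 = 3 := Real.sq_sqrt (by norm_num)
  have h11 : s11 ^ 2 = 11 := Real.sq_sqrt (by norm_num)
  set a : Fin 11 → ℝ := ![-1, 1, 0, -3/4 - s3*s11/12, 1/2, (s3*s11 - 1)/12,
    3/4 + s3*s11/12, -1/2, (1 - s3*s11)/12, 1/3, -1/3] with ha_def
  set b : Fin 11 → ℝ := ![0, 0, 0, s3/12 + s11/4, s3/2, (s3 + s11)/12,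
    s3/12 + s11/4, s3/2, (s3 + s11)/12, s3/2 + s11/6, s3/2 + s11/6] with hb_def
  set p : Fin 11 → EuclideanSpace ℝ (Fin n) :=
    fun i => z + (d * a i) • u + (d * b i) • w with hp_def
  have ea0 : a 0 = -1 := rfl
  have ea1 : a 1 = 1 := rfl
  have ea2 : a 2 = 0 := rfl
  have ea3 : a 3 = -3/4 - s3*s11/12 := rfl
  have ea4 : a 4 = 1/2 := rfl
  have ea5 : a 5 = (s3*s11 - 1)/12 := rfl
  have ea6 : a 6 = 3/4 + s3*s11/12 := rfl
  have ea7 : a 7 = -1/2 := rfl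
  have ea8 : a 8 = (1 - s3*s11)/12 := rfl
  have ea9 : a 9 = 1/3 := rfl
  have ea10 : a 10 = -1/3 := rfl
  have eb0 : b 0 = 0 := rfl
  have eb1 : b 1 = 0 := rfl
  have eb2 : b 2 = 0 := rfl
  have eb3 : b 3 = s3/12 + s11/4 := rfl
  have eb4 : b 4 = s3/2 := rfl
  have eb5 : b 5 = (s3 + s11)/12 := rfl
  have eb6 : b 6 = s3/12 + s11/4 := rfl
  have eb7 : b 7 = s3/2 := rfl
  have eb8 : b 8 = (s3 + s11)/12 := rfl
  have eb9 : b 9 = s3/2 + s11/6 := rfl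
  have eb10 : b 10 = s3/2 + s11/6 := rfl

  have hnormsq : ∀ α β : ℝ, ‖α • u + β • w‖ ^ 2 = α ^ 2 + β ^ 2 := by
    intro α β
    rw [norm_add_sq_real, norm_smul α u, norm_smul β w, real_inner_smul_left,
      real_inner_smul_right, huw, hu, hw]
    simp [sq_abs, mul_pow]
  have hdiff : ∀ i j : Fin 11,
      p i - p j = (d * (a i - a j)) • u + (d * (b i - b j)) • w := by
    intro i j
    simp only [hp_def]
    module
  have edge : ∀ i j : Fin 11, (a i - a j) ^ 2 + (b i - b j) ^ 2 = 1 →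
      ‖p i - p j‖ = d := by
    intro i j hij
    have h2 : ‖p i - p j‖ ^ 2 = d ^ 2 := by
      rw [hdiff i j, hnormsq]
      linear_combination (d ^ 2) * hij
    calc ‖p i - p j‖ = Real.sqrt (‖p i - p j‖ ^ 2) :=
          (Real.sqrt_sq (norm_nonneg _)).symm
      _ = Real.sqrt (d ^ 2) := by rw [h2]
      _ = d := Real.sqrt_sq hd.le
  have hcoef : ∀ c : ℝ, (d * c) • u = (c / 2) • (y - x) := by
    intro c
    rw [hu_def, smul_smul]
    congr 1
    field_simp
  have hx : p 0 = x := by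
    show z + (d * a 0) • u + (d * b 0) • w = x
    rw [ea0, eb0, hcoef, hz_def]
    module
  have hy : p 1 = y := by
    show z + (d * a 1) • u + (d * b 1) • w = y
    rw [ea1, eb1, hcoef, hz_def]
    module
  have hz : p 2 = (1 / 2 : ℝ) • (x + y) := by
    show z + (d * a 2) • u + (d * b 2) • w = (1 / 2 : ℝ) • (x + y)
    rw [ea2, eb2, hz_def]
    module
  refine ⟨p, hx, hy, hz, ?_⟩
  intro k
  fin_cases k
  · exact edge 0 2 (by rw [ea0, ea2, eb0, eb2]; norm_num)
  · exact edge 0 3 (by rw [ea0, ea3, eb0, eb3]; linear_combination ((1:ℝ)/144 + s11^2/144) * h3 + (1/12 : ℝ) * h11)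
  · exact edge 0 7 (by rw [ea0, ea7, eb0, eb7]; linear_combination (1/4 : ℝ) * h3)
  · exact edge 1 2 (by rw [ea1, ea2, eb1, eb2]; norm_num)
  · exact edge 1 4 (by rw [ea1, ea4, eb1, eb4]; linear_combination (1/4 : ℝ) * h3)
  · exact edge 1 6 (by rw [ea1, ea6, eb1, eb6]; linear_combination ((1:ℝ)/144 + s11^2/144) * h3 + (1/12 : ℝ) * h11)
  · exact edge 2 4 (by rw [ea2, ea4, eb2, eb4]; linear_combination (1/4 : ℝ) * h3)
  · exact edge 2 7 (by rw [ea2, ea7, eb2, eb7]; linear_combination (1/4 : ℝ) * h3)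
  · exact edge 3 8 (by rw [ea3, ea8, eb3, eb8]; linear_combination (1/36 : ℝ) * h11)
  · exact edge 3 10 (by rw [ea3, ea10, eb3, eb10]; linear_combination ((25:ℝ)/144 + s11^2/144) * h3 + (1/36 : ℝ) * h11)
  · exact edge 4 7 (by rw [ea4, ea7, eb4, eb7]; norm_num)
  · exact edge 4 8 (by rw [ea4, ea8, eb4, eb8]; linear_combination ((25:ℝ)/144 + s11^2/144) * h3 + (1/36 : ℝ) * h11)
  · exact edge 4 10 (by rw [ea4, ea10, eb4, eb10]; linear_combination (1/36 : ℝ) * h11)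
  · exact edge 5 6 (by rw [ea5, ea6, eb5, eb6]; linear_combination (1/36 : ℝ) * h11)
  · exact edge 5 7 (by rw [ea5, ea7, eb5, eb7]; linear_combination ((25:ℝ)/144 + s11^2/144) * h3 + (1/36 : ℝ) * h11)
  · exact edge 5 9 (by rw [ea5, ea9, eb5, eb9]; linear_combination ((25:ℝ)/144 + s11^2/144) * h3 + (1/36 : ℝ) * h11)
  · exact edge 6 9 (by rw [ea6, ea9, eb6, eb9]; linear_combination ((25:ℝ)/144 + s11^2/144) * h3 + (1/36 : ℝ) * h11)
  · exact edge 7 9 (by rw [ea7, ea9, eb7, eb9]; linear_combination (1/36 : ℝ) * h11)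
  · exact edge 8 10 (by rw [ea8, ea10, eb8, eb10]; linear_combination ((25:ℝ)/144 + s11^2/144) * h3 + (1/36 : ℝ) * h11)
end
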